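/- arXiv:1709.03547 — 6 statements merged into one kernel-verified Lean document; each statement's English description precedes it below -/
import Mathlib

section
/- In a perfect-fluid spacetime (Ricci tensor R_{ij} = A g_{ij} + B u_i u_j with B ≠ 0, u unit timelike), the expansion scalar satisfies (n−2)\dot A + \dot B = −2θB, i.e., θ = −(1/(2B)) u^k ∇_k[(n−2)A + B]. -/
/-!
Contract the Bianchi identity with `u^i`: since `u^i u_i = -1` and the acceleration is orthogonal
to `u` (because `u^j ∇_k u_j = 0`), the `B θ u_i` term contributes `-θ B` and the `B \dot u_i` term
drops out, leaving a scalar identity between `\dot A`, `\dot B` and `θ B`.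
-/

open Matrix

section

variable {ι K : Type*} [Fintype ι]

theorem dotProduct_vecMul_self_eq_zero {R : Type*} [CommSemiring R] (v : ι → R)
    (D : Matrix ι ι R) (h : ∀ k, v ⬝ᵥ D k = 0) : v ⬝ᵥ (v ᵥ* D) = 0 := by
  have hDv : D *ᵥ v = 0 := funext fun k => by rw [mulVec, dotProduct_comm, h k, Pi.zero_apply]
  rw [dotProduct_comm, ← dotProduct_mulVec, hDv, dotProduct_zero]

theorem contracted_bianchi_along_flow [Field K] [CharZero K] (U u α β a : ι → K) (N B θ : K)
    (hUu : U ⬝ᵥ u = -1) (hUa : U ⬝ᵥ a = 0)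
    (hBianchi : ∀ i, α i + (U ⬝ᵥ β) * u i + B * (θ * u i + a i) = 1 / 2 * (N * α i - β i)) :
    (N - 2) * (U ⬝ᵥ α) + U ⬝ᵥ β = -2 * θ * B := by
  have hvec : α + (U ⬝ᵥ β + B * θ) • u + B • a = (1 / 2 : K) • (N • α - β) :=
    funext fun i => by
      simp only [Pi.add_apply, Pi.smul_apply, Pi.sub_apply, smul_eq_mul, ← hBianchi i]
      ring
  have hcontr := congrArg (U ⬝ᵥ ·) hvec
  simp only [dotProduct_add, dotProduct_smul, dotProduct_sub, smul_eq_mul, hUu, hUa] at hcontr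
  linear_combination (-2) * hcontr

end

theorem expansion_from_Bianchi_general
    (M : Type*) (n : ℕ)
    (u : M → Fin n → ℝ)
    -- Du x k l  represents  ∇_k u_l
    (Du : M → Fin n → Fin n → ℝ)
    (uup : M → Fin n → ℝ)
    -- u is unit timelike : u_k u^k = -1
    (hunit : ∀ x, ∑ k, uup x k * u x k = -1)
    -- consequence of metric compatibility and u_k u^k = -1 : u^j ∇_k u_j = 0
    (hDnorm : ∀ x k, ∑ j, uup x j * Du x k j = 0)
    -- expansion scalar θ = ∇_k u^k
    (θ : M → ℝ)
    -- acceleration  \dot u_k = u^m ∇_m u_k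
    (acc : M → Fin n → ℝ) (hacc : ∀ x k, acc x k = ∑ m, uup x m * Du x m k)
    -- perfect-fluid (quasi-Einstein) Ricci tensor : R_{ij} = A g_{ij} + B u_i u_j
    (B : M → ℝ) (hB : ∀ x, B x ≠ 0)
    -- gradients of the scalars A, B
    (DA DB : M → Fin n → ℝ)
    -- contracted second Bianchi identity ∇^j R_{ij} = (1/2) ∇_i R for
    -- R_{ij} = A g_{ij} + B u_i u_j, R = n A - B (divergence expanded by Leibniz)
    (hBianchi : ∀ x i, DA x i + (∑ j, uup x j * DB x j) * u x i
        + B x * (θ x * u x i + acc x i) = (1/2) * ((n:ℝ) * DA x i - DB x i)) :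
    ∀ x, ((n:ℝ) - 2) * (∑ k, uup x k * DA x k) + (∑ k, uup x k * DB x k)
        = -2 * θ x * B x ∧
      θ x = -(1/(2 * B x)) * ∑ k, uup x k * (((n:ℝ) - 2) * DA x k + DB x k) := by
  intro x
  have hacc_orth : uup x ⬝ᵥ acc x = 0 := by
    have hacc_vec : acc x = uup x ᵥ* Du x := funext (hacc x)
    exact hacc_vec ▸ dotProduct_vecMul_self_eq_zero (uup x) (Du x) (hDnorm x)
  have key := contracted_bianchi_along_flow (uup x) (u x) (DA x) (DB x) (acc x) n (B x) (θ x)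
    (hunit x) hacc_orth (hBianchi x)
  refine ⟨key, ?_⟩
  change θ x = -(1 / (2 * B x)) * uup x ⬝ᵥ (((n : ℝ) - 2) • DA x + DB x)
  rw [dotProduct_add, dotProduct_smul, smul_eq_mul, key]
  field_simp [hB x]

theorem expansion_from_Bianchi
    (M : Type*) (n : ℕ)
    (g ginv : M → Fin n → Fin n → ℝ)
    (u : M → Fin n → ℝ)
    -- Du x k l  represents  ∇_k u_l
    (Du : M → Fin n → Fin n → ℝ)
    (uup : M → Fin n → ℝ)
    (huup : ∀ x i, uup x i = ∑ j, ginv x i j * u x j)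
    -- u is unit timelike : u_k u^k = -1
    (hunit : ∀ x, ∑ k, uup x k * u x k = -1)
    -- consequence of metric compatibility and u_k u^k = -1 : u^j ∇_k u_j = 0
    (hDnorm : ∀ x k, ∑ j, uup x j * Du x k j = 0)
    (hn : 3 ≤ n)
    -- expansion scalar θ = ∇_k u^k
    (θ : M → ℝ) (hθ : ∀ x, θ x = ∑ k, ∑ l, ginv x k l * Du x k l)
    -- acceleration  \dot u_k = u^m ∇_m u_k
    (acc : M → Fin n → ℝ) (hacc : ∀ x k, acc x k = ∑ m, uup x m * Du x m k)
    -- perfect-fluid (quasi-Einstein) Ricci tensor : R_{ij} = A g_{ij} + B u_i u_j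
    (A B : M → ℝ) (hB : ∀ x, B x ≠ 0)
    -- gradients of the scalars A, B
    (DA DB : M → Fin n → ℝ)
    -- contracted second Bianchi identity ∇^j R_{ij} = (1/2) ∇_i R for
    -- R_{ij} = A g_{ij} + B u_i u_j, R = n A - B (divergence expanded by Leibniz)
    (hBianchi : ∀ x i, DA x i + (∑ j, uup x j * DB x j) * u x i
        + B x * (θ x * u x i + acc x i) = (1/2) * ((n:ℝ) * DA x i - DB x i)) :
    ∀ x, ((n:ℝ) - 2) * (∑ k, uup x k * DA x k) + (∑ k, uup x k * DB x k)
        = -2 * θ x * B x ∧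
      θ x = -(1/(2 * B x)) * ∑ k, uup x k * (((n:ℝ) - 2) * DA x k + DB x k) :=
  expansion_from_Bianchi_general M n u Du uup hunit hDnorm θ acc hacc B hB DA DB hBianchi
end

section
/- In a perfect-fluid spacetime, the acceleration of the velocity field satisfies 2B \dot u_j = ∇_j[(n−2)A − B] + u_j [(n−2)\dot A − \dot B], equivalently \dot u_j = (1/(2B)) h_j^k ∇_k[(n−2)A − B]. -/
open Finset

theorem acceleration_from_Bianchi
    (M : Type*) (n : ℕ)
    (g ginv : M → Fin n → Fin n → ℝ)
    (u : M → Fin n → ℝ)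
    -- Du x k l  represents  ∇_k u_l
    (Du : M → Fin n → Fin n → ℝ)
    (uup : M → Fin n → ℝ)
    (huup : ∀ x i, uup x i = ∑ j, ginv x i j * u x j)
    -- u is unit timelike : u_k u^k = -1
    (hunit : ∀ x, ∑ k, uup x k * u x k = -1)
    -- consequence of metric compatibility and u_k u^k = -1 : u^j ∇_k u_j = 0
    (hDnorm : ∀ x k, ∑ j, uup x j * Du x k j = 0)
    (hn : 3 ≤ n)
    -- expansion scalar θ = ∇_k u^k
    (θ : M → ℝ) (hθ : ∀ x, θ x = ∑ k, ∑ l, ginv x k l * Du x k l)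
    -- mixed projector h_k{}^i = δ_k^i + u_k u^i
    (hmix : M → Fin n → Fin n → ℝ)
    (hdefhmix : ∀ x k i, hmix x k i = (if k = i then (1:ℝ) else 0) + u x k * uup x i)
    -- acceleration  \dot u_k = u^m ∇_m u_k
    (acc : M → Fin n → ℝ) (hacc : ∀ x k, acc x k = ∑ m, uup x m * Du x m k)
    -- perfect-fluid (quasi-Einstein) Ricci tensor : R_{ij} = A g_{ij} + B u_i u_j
    (A B : M → ℝ) (hB : ∀ x, B x ≠ 0)
    -- gradients of the scalars A, B
    (DA DB : M → Fin n → ℝ)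
    -- contracted second Bianchi identity ∇^j R_{ij} = (1/2) ∇_i R for
    -- R_{ij} = A g_{ij} + B u_i u_j, R = n A - B (divergence expanded by Leibniz)
    (hBianchi : ∀ x i, DA x i + (∑ j, uup x j * DB x j) * u x i
        + B x * (θ x * u x i + acc x i) = (1/2) * ((n:ℝ) * DA x i - DB x i)) :
    ∀ x j, 2 * B x * acc x j = (((n:ℝ) - 2) * DA x j - DB x j)
        + u x j * (∑ k, uup x k * (((n:ℝ) - 2) * DA x k - DB x k)) ∧
      acc x j = (1/(2 * B x)) * ∑ k, hmix x j k * (((n:ℝ) - 2) * DA x k - DB x k) := by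

  intro x j
  set S := ∑ k, uup x k * (((n:ℝ) - 2) * DA x k - DB x k) with hS
  have haccu : ∑ i, uup x i * acc x i = 0 := by
    simp only [hacc, Finset.mul_sum]
    rw [Finset.sum_comm]
    apply Finset.sum_eq_zero
    intro m _
    calc ∑ i, uup x i * (uup x m * Du x m i)
        = uup x m * ∑ i, uup x i * Du x m i := by
          rw [Finset.mul_sum]; apply Finset.sum_congr rfl; intros; ring
      _ = 0 := by rw [hDnorm x m]; ring
  have key : ∀ i, 2 * B x * acc x i = (((n:ℝ) - 2) * DA x i - DB x i)
      - 2 * u x i * ((∑ k, uup x k * DB x k) + B x * θ x) := by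
    intro i
    linear_combination 2 * hBianchi x i
  have hC : (∑ k, uup x k * DB x k) + B x * θ x = -(1/2) * S := by
    have h1 : ∑ i, uup x i * (2 * B x * acc x i) = 0 := by
      calc ∑ i, uup x i * (2 * B x * acc x i)
          = 2 * B x * ∑ i, uup x i * acc x i := by
            rw [Finset.mul_sum]; apply Finset.sum_congr rfl; intros; ring
        _ = 0 := by rw [haccu]; ring
    have h2 : ∑ i, uup x i * (2 * B x * acc x i)
        = S - 2 * ((∑ k, uup x k * DB x k) + B x * θ x) * ∑ i, uup x i * u x i := by
      rw [hS, Finset.mul_sum, ← Finset.sum_sub_distrib]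
      apply Finset.sum_congr rfl
      intro i _
      rw [key i]; ring
    rw [h1, hunit x] at h2
    linarith
  have first : 2 * B x * acc x j = (((n:ℝ) - 2) * DA x j - DB x j) + u x j * S := by
    rw [key j, hC]; ring
  refine ⟨first, ?_⟩
  have hproj : ∑ k, hmix x j k * (((n:ℝ) - 2) * DA x k - DB x k)
      = (((n:ℝ) - 2) * DA x j - DB x j) + u x j * S := by
    simp only [hdefhmix, add_mul, Finset.sum_add_distrib, hS, Finset.mul_sum]
    congr 1
    · simp [ite_mul]
    · apply Finset.sum_congr rfl; intros; ring
  rw [hproj, ← first]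
  have hBx := hB x
  field_simp
end

section
/- In an n-dimensional perfect-fluid spacetime (n ≥ 4), the sum of shear and vorticity is determined by the Weyl tensor: B(σ_{kl} + ω_{kl}) = −((n−2)/(n−3)) u^j h_l^q ∇^m C_{jkqm}. Consequently σ_{kl} = −((n−2)/(2B(n−3))) u^j (h_k^q ∇^m C_{jlqm} + h_l^q ∇^m C_{jkqm}) and ω_{kl} = ((n−2)/(2B(n−3))) u^j (h_k^q ∇^m C_{jlqm} − h_l^q ∇^m C_{jkqm}). -/
open Finset

/-!
Up to the factor `(n-3)/(n-2)`, `∇^m C_{jklm}` is the antisymmetrised gradient `∇_k S_{jl} - ∇_j S_{kl}`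
of `S = (A - R/(2(n-1))) g + B u ⊗ u`. Projecting `l` orthogonally to `u` and contracting `j` with
`u^j` leaves `-B (∇_k u_l + u_k u̇_l)` plus a multiple of `h_{kl}` whose coefficient,
`u^j ∇_j (A - R/(2(n-1)))`, the contracted Bianchi identity turns into `-Bθ/(n-1)`.
As `h_k^i h_l^j ∇_i u_j = ∇_k u_l + u_k u̇_l`, the result is `-(n-3)/(n-2) · B (σ_{kl} + ω_{kl})`;
the symmetric and antisymmetric parts in `k, l` separate `σ` and `ω`.
-/

section Kinematics

variable {ι : Type*} [Fintype ι]

theorem dotProduct_acceleration_eq_zero {uup acc : ι → ℝ} {Du : ι → ι → ℝ}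
    (hDnorm : ∀ k, uup ⬝ᵥ Du k = 0) (hacc : ∀ l, acc l = ∑ m, uup m * Du m l) :
    uup ⬝ᵥ acc = 0 := by
  calc uup ⬝ᵥ acc = ∑ m, uup m * (uup ⬝ᵥ Du m) := by
        simp only [dotProduct, hacc, mul_sum]
        rw [sum_comm]
        exact sum_congr rfl fun m _ => sum_congr rfl fun q _ => by ring
    _ = 0 := by simp [hDnorm]

theorem contracted_bianchi {N B θ : ℝ} {u uup DA DB acc : ι → ℝ}
    (hunit : uup ⬝ᵥ u = -1) (hacc : uup ⬝ᵥ acc = 0)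
    (hBianchi : ∀ i, DA i + (uup ⬝ᵥ DB) * u i + B * (θ * u i + acc i)
      = 1 / 2 * (N * DA i - DB i)) :
    (N - 2) * (uup ⬝ᵥ DA) + uup ⬝ᵥ DB + 2 * B * θ = 0 := by
  have hvec : DA + (uup ⬝ᵥ DB + B * θ) • u + B • acc = (1 / 2 * N) • DA - (1 / 2 : ℝ) • DB :=
    funext fun i => by
      simp only [Pi.add_apply, Pi.sub_apply, Pi.smul_apply, smul_eq_mul]
      linear_combination hBianchi i
  have hcontracted := congrArg (uup ⬝ᵥ ·) hvec
  simp only [dotProduct_add, dotProduct_sub, dotProduct_smul, smul_eq_mul, hunit, hacc]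
    at hcontracted
  linear_combination (-2) * hcontracted

variable [DecidableEq ι]

def spatialProjector (u uup : ι → ℝ) (k i : ι) : ℝ :=
  (if k = i then 1 else 0) + u k * uup i

theorem spatialProjector_dotProduct (u uup f : ι → ℝ) (p : ι) :
    spatialProjector u uup p ⬝ᵥ f = f p + u p * (uup ⬝ᵥ f) := by
  simp [spatialProjector, dotProduct, add_mul, sum_add_distrib, mul_assoc, mul_sum]

theorem spatialProjector_dotProduct_of_orthogonal {u uup f : ι → ℝ} (hf : uup ⬝ᵥ f = 0)
    (p : ι) : spatialProjector u uup p ⬝ᵥ f = f p := by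
  rw [spatialProjector_dotProduct, hf, mul_zero, add_zero]

theorem spatialProjector_dotProduct_self {u uup : ι → ℝ} (hunit : uup ⬝ᵥ u = -1) (p : ι) :
    spatialProjector u uup p ⬝ᵥ u = 0 := by
  rw [spatialProjector_dotProduct, hunit, mul_neg_one, add_neg_cancel]

theorem dotProduct_metric_of_raised {g ginv : ι → ι → ℝ} {u uup : ι → ℝ}
    (huup : ∀ i, uup i = ginv i ⬝ᵥ u) (hgsym : ∀ i j, g i j = g j i)
    (hginvsym : ∀ i j, ginv i j = ginv j i)
    (hginv : ∀ i j, ∑ m, ginv i m * g m j = if i = j then 1 else 0) (a : ι) :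
    uup ⬝ᵥ g a = u a := by
  calc uup ⬝ᵥ g a = ∑ m, u m * ∑ j, ginv m j * g j a := by
        simp only [dotProduct, huup, sum_mul, mul_sum]
        rw [sum_comm]
        refine sum_congr rfl fun m _ => sum_congr rfl fun j _ => ?_
        rw [hgsym, hginvsym]
        ring
    _ = u a := by simp [hginv]

theorem sum_spatialProjector_mul_spatialProjector_mul {u uup acc : ι → ℝ}
    {Du : ι → ι → ℝ} (hDnorm : ∀ k, uup ⬝ᵥ Du k = 0)
    (hacc : ∀ l, acc l = ∑ m, uup m * Du m l) (k l : ι) :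
    ∑ i, ∑ j, spatialProjector u uup k i * spatialProjector u uup l j * Du i j
      = Du k l + u k * acc l := by
  calc _ = ∑ i, spatialProjector u uup k i * (spatialProjector u uup l ⬝ᵥ Du i) := by
        simp only [dotProduct, mul_sum, mul_assoc]
    _ = spatialProjector u uup k ⬝ᵥ fun i => Du i l := by
        simp only [spatialProjector_dotProduct_of_orthogonal (hDnorm _)]
        rfl
    _ = _ := by rw [spatialProjector_dotProduct, hacc]; rfl

theorem sum_spatialProjector_mul_spatialProjector_mul_swap {u uup acc : ι → ℝ}
    {Du : ι → ι → ℝ} (hDnorm : ∀ k, uup ⬝ᵥ Du k = 0)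
    (hacc : ∀ l, acc l = ∑ m, uup m * Du m l) (k l : ι) :
    ∑ i, ∑ j, spatialProjector u uup k i * spatialProjector u uup l j * Du j i
      = Du l k + u l * acc k := by
  rw [sum_comm, ← sum_spatialProjector_mul_spatialProjector_mul hDnorm hacc l k]
  simp only [mul_comm (spatialProjector u uup k _)]

theorem spatialProjector_dotProduct_weylDivergence {N B : ℝ} {g Du : ι → ι → ℝ} {u uup DA DB : ι → ℝ}
    {DRic divC : ι → ι → ι → ℝ} (hunit : uup ⬝ᵥ u = -1) (hDnorm : ∀ k, uup ⬝ᵥ Du k = 0)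
    (hmetric : ∀ a, uup ⬝ᵥ g a = u a)
    (hDRic : ∀ k j l, DRic k j l = DA k * g j l + DB k * u j * u l
      + B * (Du k j * u l + u j * Du k l))
    (hdivC : ∀ j k l, divC j k l = (N - 3) / (N - 2) *
      (DRic k j l - DRic j k l - 1 / (2 * (N - 1)) *
        (g j l * (N * DA k - DB k) - g k l * (N * DA j - DB j))))
    (j k l : ι) :
    spatialProjector u uup l ⬝ᵥ divC j k = (N - 3) / (N - 2) *
      ((DA k - (N * DA k - DB k) / (2 * (N - 1))) * (g j l + u j * u l)
        - (DA j - (N * DA j - DB j) / (2 * (N - 1))) * (g k l + u k * u l)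
        + B * (u j * Du k l - u k * Du j l)) := by
  have hvec : divC j k = ((N - 3) / (N - 2)) •
      ((DA k - (N * DA k - DB k) / (2 * (N - 1))) • g j
        - (DA j - (N * DA j - DB j) / (2 * (N - 1))) • g k
        + (DB k * u j - DB j * u k + B * (Du k j - Du j k)) • u
        + (B * u j) • Du k - (B * u k) • Du j) := by
    funext q
    simp only [hdivC, hDRic, Pi.add_apply, Pi.sub_apply, Pi.smul_apply, smul_eq_mul]
    ring
  rw [hvec]
  simp only [dotProduct_add, dotProduct_sub, dotProduct_smul, smul_eq_mul,
    spatialProjector_dotProduct_self hunit, spatialProjector_dotProduct, hmetric,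
    spatialProjector_dotProduct_of_orthogonal (hDnorm _)]
  ring

theorem sum_mul_spatialProjector_weylDivergence {N B θ : ℝ} {g Du : ι → ι → ℝ}
    {u uup DA DB acc : ι → ℝ} {DRic divC : ι → ι → ι → ℝ} (hN : N - 1 ≠ 0)
    (hunit : uup ⬝ᵥ u = -1) (hDnorm : ∀ k, uup ⬝ᵥ Du k = 0)
    (hgsym : ∀ i j, g i j = g j i) (hmetric : ∀ a, uup ⬝ᵥ g a = u a)
    (hacc : ∀ l, acc l = ∑ m, uup m * Du m l)
    (hBianchi : ∀ i, DA i + (uup ⬝ᵥ DB) * u i + B * (θ * u i + acc i)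
      = 1 / 2 * (N * DA i - DB i))
    (hDRic : ∀ k j l, DRic k j l = DA k * g j l + DB k * u j * u l
      + B * (Du k j * u l + u j * Du k l))
    (hdivC : ∀ j k l, divC j k l = (N - 3) / (N - 2) *
      (DRic k j l - DRic j k l - 1 / (2 * (N - 1)) *
        (g j l * (N * DA k - DB k) - g k l * (N * DA j - DB j))))
    (k l : ι) :
    ∑ j, uup j * ∑ q, spatialProjector u uup l q * divC j k q = (N - 3) / (N - 2) * B *
      (θ / (N - 1) * (g k l + u k * u l) - (Du k l + u k * acc l)) := by
  have hbianchi := contracted_bianchi hunit (dotProduct_acceleration_eq_zero hDnorm hacc) hBianchi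
  have hvec : (fun j => spatialProjector u uup l ⬝ᵥ divC j k) = ((N - 3) / (N - 2)) •
      ((DA k - (N * DA k - DB k) / (2 * (N - 1))) • (fun j => g j l + u j * u l)
        - (g k l + u k * u l) • (DA - (N / (2 * (N - 1))) • DA + (1 / (2 * (N - 1))) • DB)
        + (B * Du k l) • u - (B * u k) • fun j => Du j l) := by
    funext j
    rw [spatialProjector_dotProduct_weylDivergence hunit hDnorm hmetric hDRic hdivC]
    simp only [Pi.add_apply, Pi.sub_apply, Pi.smul_apply, smul_eq_mul]
    ring
  have horth : uup ⬝ᵥ (fun j => g j l + u j * u l) = 0 := by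
    simp only [hgsym _ l]
    rw [show (fun j => g l j + u j * u l) = g l + u l • u by ext; simp [mul_comm]]
    rw [dotProduct_add, dotProduct_smul, hmetric, hunit]
    simp
  change uup ⬝ᵥ (fun j => spatialProjector u uup l ⬝ᵥ divC j k) = _
  rw [hvec]
  simp only [dotProduct_add, dotProduct_sub, dotProduct_smul, smul_eq_mul, horth, hunit]
  rw [show (uup ⬝ᵥ fun j => Du j l) = acc l from (hacc l).symm,
    mul_assoc ((N - 3) / (N - 2)) B]
  congr 1
  field_simp
  linear_combination -(g k l + u k * u l) * hbianchi

end Kinematics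

theorem shear_and_vorticity_from_weyl_general
    (M : Type*) (n : ℕ)
    (g ginv : M → Fin n → Fin n → ℝ)
    (u : M → Fin n → ℝ)
    -- Du x k l  represents  ∇_k u_l
    (Du : M → Fin n → Fin n → ℝ)
    (uup : M → Fin n → ℝ)
    (huup : ∀ x i, uup x i = ∑ j, ginv x i j * u x j)
    -- u is unit timelike : u_k u^k = -1
    (hunit : ∀ x, ∑ k, uup x k * u x k = -1)
    (hgsym : ∀ x i j, g x i j = g x j i)
    (hginvsym : ∀ x i j, ginv x i j = ginv x j i)
    (hginv : ∀ x i j, ∑ m, ginv x i m * g x m j = if i = j then (1:ℝ) else 0)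
    -- consequence of metric compatibility and u_k u^k = -1 : u^j ∇_k u_j = 0
    (hDnorm : ∀ x k, ∑ j, uup x j * Du x k j = 0)
    (hn : 4 ≤ n)
    -- expansion scalar θ = ∇_k u^k
    (θ : M → ℝ)
    -- projector h_{kl} = g_{kl} + u_k u_l
    (h : M → Fin n → Fin n → ℝ)
    (hdefh : ∀ x k l, h x k l = g x k l + u x k * u x l)
    -- mixed projector h_k{}^i = δ_k^i + u_k u^i
    (hmix : M → Fin n → Fin n → ℝ)
    (hdefhmix : ∀ x k i, hmix x k i = (if k = i then (1:ℝ) else 0) + u x k * uup x i)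
    -- acceleration  \dot u_k = u^m ∇_m u_k
    (acc : M → Fin n → ℝ) (hacc : ∀ x k, acc x k = ∑ m, uup x m * Du x m k)
    -- vorticity ω_{kl} = (1/2) h_k{}^i h_l{}^j (∇_i u_j - ∇_j u_i)
    (ω : M → Fin n → Fin n → ℝ)
    (hω : ∀ x k l, ω x k l =
      (1/2) * ∑ i, ∑ j, hmix x k i * hmix x l j * (Du x i j - Du x j i))
    -- shear σ_{kl} = (1/2) h_k{}^i h_l{}^j (∇_i u_j + ∇_j u_i) - (θ/(n-1)) h_{kl}
    (σ : M → Fin n → Fin n → ℝ)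
    (hσ : ∀ x k l, σ x k l =
      (1/2) * (∑ i, ∑ j, hmix x k i * hmix x l j * (Du x i j + Du x j i))
        - (θ x / ((n:ℝ) - 1)) * h x k l)
    -- perfect-fluid (quasi-Einstein) Ricci tensor : R_{ij} = A g_{ij} + B u_i u_j
    (B : M → ℝ) (hB : ∀ x, B x ≠ 0)
    -- gradients of the scalars A, B
    (DA DB : M → Fin n → ℝ)
    -- contracted second Bianchi identity ∇^j R_{ij} = (1/2) ∇_i R for
    -- R_{ij} = A g_{ij} + B u_i u_j, R = n A - B (divergence expanded by Leibniz)
    (hBianchi : ∀ x i, DA x i + (∑ j, uup x j * DB x j) * u x i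
        + B x * (θ x * u x i + acc x i) = (1/2) * ((n:ℝ) * DA x i - DB x i))
    -- DRic x k j l  represents  ∇_k R_{jl}, computed by Leibniz from R_{ij} = A g_{ij} + B u_i u_j
    (DRic : M → Fin n → Fin n → Fin n → ℝ)
    (hDRic : ∀ x k j l, DRic x k j l = DA x k * g x j l + DB x k * u x j * u x l
        + B x * (Du x k j * u x l + u x j * Du x k l))
    -- divC x j k l  represents  ∇^m C_{jklm}, with the standard divergence identity
    -- ∇^m C_{jklm} = ((n-3)/(n-2)) [∇_k R_{jl} - ∇_j R_{kl} - (1/(2(n-1)))(g_{jl} ∇_k R - g_{kl} ∇_j R)]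
    (divC : M → Fin n → Fin n → Fin n → ℝ)
    (hdivC : ∀ x j k l, divC x j k l = (((n:ℝ) - 3)/((n:ℝ) - 2)) *
        (DRic x k j l - DRic x j k l - (1/(2*((n:ℝ) - 1))) *
          (g x j l * ((n:ℝ) * DA x k - DB x k) - g x k l * ((n:ℝ) * DA x j - DB x j)))) :
    ∀ x k l,
      B x * (σ x k l + ω x k l) =
        -(((n:ℝ) - 2)/((n:ℝ) - 3)) * ∑ j, ∑ q, uup x j * hmix x l q * divC x j k q ∧
      σ x k l = -(((n:ℝ) - 2)/(2 * B x * ((n:ℝ) - 3))) *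
        ∑ j, (uup x j * ((∑ q, hmix x k q * divC x j l q) + (∑ q, hmix x l q * divC x j k q))) ∧
      ω x k l = (((n:ℝ) - 2)/(2 * B x * ((n:ℝ) - 3))) *
        ∑ j, (uup x j * ((∑ q, hmix x k q * divC x j l q) - (∑ q, hmix x l q * divC x j k q))) := by
  intro x k l
  obtain rfl : hmix = fun x => spatialProjector (u x) (uup x) :=
    funext fun x => funext₂ (hdefhmix x)
  obtain rfl : h = fun x k l => g x k l + u x k * u x l := funext fun x => funext₂ (hdefh x)
  have hN : (4 : ℝ) ≤ n := by exact_mod_cast hn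
  have hn1 : (n : ℝ) - 1 ≠ 0 := by linarith
  have hn2 : (n : ℝ) - 2 ≠ 0 := by linarith
  have hn3 : (n : ℝ) - 3 ≠ 0 := by linarith
  have hBx := hB x
  have hS := sum_mul_spatialProjector_weylDivergence hn1 (hunit x) (hDnorm x) (hgsym x)
    (dotProduct_metric_of_raised (huup x) (hgsym x) (hginvsym x) (hginv x))
    (hacc x) (hBianchi x) (hDRic x) (hdivC x)
  have hT := sum_spatialProjector_mul_spatialProjector_mul (u := u x) (hDnorm x) (hacc x)
  have hT' := sum_spatialProjector_mul_spatialProjector_mul_swap (u := u x) (hDnorm x) (hacc x)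
  have hσkl : σ x k l = ((Du x k l + u x k * acc x l) + (Du x l k + u x l * acc x k)) / 2
      - θ x / (n - 1) * (g x k l + u x k * u x l) := by
    simp only [hσ, mul_add, sum_add_distrib, hT, hT']
    ring
  have hωkl : ω x k l = ((Du x k l + u x k * acc x l) - (Du x l k + u x l * acc x k)) / 2 := by
    simp only [hω, mul_sub, sum_sub_distrib, hT, hT']
    ring
  refine ⟨?_, ?_, ?_⟩
  · simp only [mul_assoc, ← mul_sum, hS, hσkl, hωkl]
    field_simp
    ring
  · simp only [mul_add, sum_add_distrib, hS, hσkl, hgsym x l k]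
    field_simp
    ring
  · simp only [mul_sub, sum_sub_distrib, hS, hωkl, hgsym x l k]
    field_simp
    ring

theorem shear_and_vorticity_from_weyl
    (M : Type*) (n : ℕ)
    (g ginv : M → Fin n → Fin n → ℝ)
    (u : M → Fin n → ℝ)
    -- Du x k l  represents  ∇_k u_l
    (Du : M → Fin n → Fin n → ℝ)
    (uup : M → Fin n → ℝ)
    (huup : ∀ x i, uup x i = ∑ j, ginv x i j * u x j)
    -- u is unit timelike : u_k u^k = -1
    (hunit : ∀ x, ∑ k, uup x k * u x k = -1)
    (hgsym : ∀ x i j, g x i j = g x j i)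
    (hginvsym : ∀ x i j, ginv x i j = ginv x j i)
    (hginv : ∀ x i j, ∑ m, ginv x i m * g x m j = if i = j then (1:ℝ) else 0)
    -- consequence of metric compatibility and u_k u^k = -1 : u^j ∇_k u_j = 0
    (hDnorm : ∀ x k, ∑ j, uup x j * Du x k j = 0)
    (hn : 4 ≤ n)
    -- expansion scalar θ = ∇_k u^k
    (θ : M → ℝ) (hθ : ∀ x, θ x = ∑ k, ∑ l, ginv x k l * Du x k l)
    -- projector h_{kl} = g_{kl} + u_k u_l
    (h : M → Fin n → Fin n → ℝ)
    (hdefh : ∀ x k l, h x k l = g x k l + u x k * u x l)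
    -- mixed projector h_k{}^i = δ_k^i + u_k u^i
    (hmix : M → Fin n → Fin n → ℝ)
    (hdefhmix : ∀ x k i, hmix x k i = (if k = i then (1:ℝ) else 0) + u x k * uup x i)
    -- acceleration  \dot u_k = u^m ∇_m u_k
    (acc : M → Fin n → ℝ) (hacc : ∀ x k, acc x k = ∑ m, uup x m * Du x m k)
    -- vorticity ω_{kl} = (1/2) h_k{}^i h_l{}^j (∇_i u_j - ∇_j u_i)
    (ω : M → Fin n → Fin n → ℝ)
    (hω : ∀ x k l, ω x k l =
      (1/2) * ∑ i, ∑ j, hmix x k i * hmix x l j * (Du x i j - Du x j i))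
    -- shear σ_{kl} = (1/2) h_k{}^i h_l{}^j (∇_i u_j + ∇_j u_i) - (θ/(n-1)) h_{kl}
    (σ : M → Fin n → Fin n → ℝ)
    (hσ : ∀ x k l, σ x k l =
      (1/2) * (∑ i, ∑ j, hmix x k i * hmix x l j * (Du x i j + Du x j i))
        - (θ x / ((n:ℝ) - 1)) * h x k l)
    -- perfect-fluid (quasi-Einstein) Ricci tensor : R_{ij} = A g_{ij} + B u_i u_j
    (A B : M → ℝ) (hB : ∀ x, B x ≠ 0)
    -- gradients of the scalars A, B
    (DA DB : M → Fin n → ℝ)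
    -- contracted second Bianchi identity ∇^j R_{ij} = (1/2) ∇_i R for
    -- R_{ij} = A g_{ij} + B u_i u_j, R = n A - B (divergence expanded by Leibniz)
    (hBianchi : ∀ x i, DA x i + (∑ j, uup x j * DB x j) * u x i
        + B x * (θ x * u x i + acc x i) = (1/2) * ((n:ℝ) * DA x i - DB x i))
    -- DRic x k j l  represents  ∇_k R_{jl}, computed by Leibniz from R_{ij} = A g_{ij} + B u_i u_j
    (DRic : M → Fin n → Fin n → Fin n → ℝ)
    (hDRic : ∀ x k j l, DRic x k j l = DA x k * g x j l + DB x k * u x j * u x l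
        + B x * (Du x k j * u x l + u x j * Du x k l))
    -- divC x j k l  represents  ∇^m C_{jklm}, with the standard divergence identity
    -- ∇^m C_{jklm} = ((n-3)/(n-2)) [∇_k R_{jl} - ∇_j R_{kl} - (1/(2(n-1)))(g_{jl} ∇_k R - g_{kl} ∇_j R)]
    (divC : M → Fin n → Fin n → Fin n → ℝ)
    (hdivC : ∀ x j k l, divC x j k l = (((n:ℝ) - 3)/((n:ℝ) - 2)) *
        (DRic x k j l - DRic x j k l - (1/(2*((n:ℝ) - 1))) *
          (g x j l * ((n:ℝ) * DA x k - DB x k) - g x k l * ((n:ℝ) * DA x j - DB x j)))) :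
    ∀ x k l,
      B x * (σ x k l + ω x k l) =
        -(((n:ℝ) - 2)/((n:ℝ) - 3)) * ∑ j, ∑ q, uup x j * hmix x l q * divC x j k q ∧
      σ x k l = -(((n:ℝ) - 2)/(2 * B x * ((n:ℝ) - 3))) *
        ∑ j, (uup x j * ((∑ q, hmix x k q * divC x j l q) + (∑ q, hmix x l q * divC x j k q))) ∧
      ω x k l = (((n:ℝ) - 2)/(2 * B x * ((n:ℝ) - 3))) *
        ∑ j, (uup x j * ((∑ q, hmix x k q * divC x j l q) - (∑ q, hmix x l q * divC x j k q))) :=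
  shear_and_vorticity_from_weyl_general M n g ginv u Du uup huup hunit hgsym hginvsym hginv hDnorm
    hn θ h hdefh hmix hdefhmix acc hacc ω hω σ hσ B hB DA DB hBianchi DRic hDRic divC hdivC
end

section
/- In a perfect-fluid spacetime of dimension n ≥ 4, if u^j u^l ∇^m C_{jklm} = 0, then either the expansion θ vanishes identically (equivalently (n−2)A + B is constant), or the vorticity ω_{kl} vanishes identically. -/
open Finset

theorem expansion_or_vorticity_vanishes
    (M : Type*) (n : ℕ)
    (g ginv : M → Fin n → Fin n → ℝ)
    (u : M → Fin n → ℝ)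
    -- Du x k l  represents  ∇_k u_l
    (Du : M → Fin n → Fin n → ℝ)
    (uup : M → Fin n → ℝ)
    (huup : ∀ x i, uup x i = ∑ j, ginv x i j * u x j)
    -- u is unit timelike : u_k u^k = -1
    (hunit : ∀ x, ∑ k, uup x k * u x k = -1)
    (hgsym : ∀ x i j, g x i j = g x j i)
    (hginvsym : ∀ x i j, ginv x i j = ginv x j i)
    (hginv : ∀ x i j, ∑ m, ginv x i m * g x m j = if i = j then (1:ℝ) else 0)
    -- consequence of metric compatibility and u_k u^k = -1 : u^j ∇_k u_j = 0
    (hDnorm : ∀ x k, ∑ j, uup x j * Du x k j = 0)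
    (hn : 4 ≤ n)
    -- expansion scalar θ = ∇_k u^k
    (θ : M → ℝ) (hθ : ∀ x, θ x = ∑ k, ∑ l, ginv x k l * Du x k l)
    -- projector h_{kl} = g_{kl} + u_k u_l
    (h : M → Fin n → Fin n → ℝ)
    (hdefh : ∀ x k l, h x k l = g x k l + u x k * u x l)
    -- mixed projector h_k{}^i = δ_k^i + u_k u^i
    (hmix : M → Fin n → Fin n → ℝ)
    (hdefhmix : ∀ x k i, hmix x k i = (if k = i then (1:ℝ) else 0) + u x k * uup x i)
    -- acceleration  \dot u_k = u^m ∇_m u_k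
    (acc : M → Fin n → ℝ) (hacc : ∀ x k, acc x k = ∑ m, uup x m * Du x m k)
    -- vorticity ω_{kl} = (1/2) h_k{}^i h_l{}^j (∇_i u_j - ∇_j u_i)
    (ω : M → Fin n → Fin n → ℝ)
    (hω : ∀ x k l, ω x k l =
      (1/2) * ∑ i, ∑ j, hmix x k i * hmix x l j * (Du x i j - Du x j i))
    -- shear σ_{kl} = (1/2) h_k{}^i h_l{}^j (∇_i u_j + ∇_j u_i) - (θ/(n-1)) h_{kl}
    (σ : M → Fin n → Fin n → ℝ)
    (hσ : ∀ x k l, σ x k l =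
      (1/2) * (∑ i, ∑ j, hmix x k i * hmix x l j * (Du x i j + Du x j i))
        - (θ x / ((n:ℝ) - 1)) * h x k l)
    -- perfect-fluid (quasi-Einstein) Ricci tensor : R_{ij} = A g_{ij} + B u_i u_j
    (A B : M → ℝ) (hB : ∀ x, B x ≠ 0)
    -- gradients of the scalars A, B
    (DA DB : M → Fin n → ℝ)
    -- contracted second Bianchi identity ∇^j R_{ij} = (1/2) ∇_i R for
    -- R_{ij} = A g_{ij} + B u_i u_j, R = n A - B (divergence expanded by Leibniz)
    (hBianchi : ∀ x i, DA x i + (∑ j, uup x j * DB x j) * u x i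
        + B x * (θ x * u x i + acc x i) = (1/2) * ((n:ℝ) * DA x i - DB x i))
    -- DRic x k j l  represents  ∇_k R_{jl}, computed by Leibniz from R_{ij} = A g_{ij} + B u_i u_j
    (DRic : M → Fin n → Fin n → Fin n → ℝ)
    (hDRic : ∀ x k j l, DRic x k j l = DA x k * g x j l + DB x k * u x j * u x l
        + B x * (Du x k j * u x l + u x j * Du x k l))
    -- divC x j k l  represents  ∇^m C_{jklm}, with the standard divergence identity
    -- ∇^m C_{jklm} = ((n-3)/(n-2)) [∇_k R_{jl} - ∇_j R_{kl} - (1/(2(n-1)))(g_{jl} ∇_k R - g_{kl} ∇_j R)]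
    (divC : M → Fin n → Fin n → Fin n → ℝ)
    (hdivC : ∀ x j k l, divC x j k l = (((n:ℝ) - 3)/((n:ℝ) - 2)) *
        (DRic x k j l - DRic x j k l - (1/(2*((n:ℝ) - 1))) *
          (g x j l * ((n:ℝ) * DA x k - DB x k) - g x k l * ((n:ℝ) * DA x j - DB x j))))
    -- hypothesis : u^j u^l ∇^m C_{jklm} = 0
    (hC : ∀ x k, ∑ j, ∑ l, uup x j * uup x l * divC x j k l = 0)
    -- dichotomy lemma, for the scalar f = (n-2)A + B :
    -- h_k{}^m ∇_m f = 0 implies f constant or ω = 0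
    (hLem : (∀ x k, ∑ m, hmix x k m * (((n:ℝ) - 2) * DA x m + DB x m) = 0) →
      (∀ x k, ((n:ℝ) - 2) * DA x k + DB x k = 0) ∨ (∀ x k l, ω x k l = 0)) :
    (∀ x, θ x = 0) ∨ (∀ x k l, ω x k l = 0) := by
  classical
  -- numeric nonvanishing facts
  have hnR : (4:ℝ) ≤ (n:ℝ) := by exact_mod_cast hn
  have hne1 : ((n:ℝ) - 1) ≠ 0 := by nlinarith
  have hne2 : ((n:ℝ) - 2) ≠ 0 := by nlinarith
  have hne3 : ((n:ℝ) - 3) ≠ 0 := by nlinarith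
  -- u^l g_{lk} = u_k
  have udotg : ∀ x k, ∑ l, uup x l * g x l k = u x k := by
    intro x k
    calc ∑ l, uup x l * g x l k
        = ∑ l, ∑ j, ginv x l j * u x j * g x l k := by
          simp only [huup, Finset.sum_mul]
      _ = ∑ j, u x j * ∑ l, ginv x j l * g x l k := by
          rw [Finset.sum_comm]
          refine Finset.sum_congr rfl fun j _ => ?_
          rw [Finset.mul_sum]
          exact Finset.sum_congr rfl fun l _ => by rw [hginvsym x l j]; ring
      _ = ∑ j, u x j * (if j = k then (1:ℝ) else 0) := by
          exact Finset.sum_congr rfl fun j _ => by rw [hginv]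
      _ = u x k := by simp
  -- u^k (acc)_k = 0
  have uacc : ∀ x, ∑ k, uup x k * acc x k = 0 := by
    intro x
    calc ∑ k, uup x k * acc x k
        = ∑ k, ∑ m, uup x m * (uup x k * Du x m k) := by
          refine Finset.sum_congr rfl fun k _ => ?_
          rw [hacc, Finset.mul_sum]
          exact Finset.sum_congr rfl fun m _ => by ring
      _ = ∑ m, uup x m * ∑ k, uup x k * Du x m k := by
          rw [Finset.sum_comm]
          exact Finset.sum_congr rfl fun m _ => by rw [Finset.mul_sum]
      _ = 0 := by
          simp only [hDnorm, mul_zero, Finset.sum_const_zero]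
  -- contracted Bianchi against u^k
  have hB2 : ∀ x, (∑ j, uup x j * DA x j) - (∑ j, uup x j * DB x j) - B x * θ x
      = (1/2) * ((n:ℝ) * (∑ j, uup x j * DA x j) - (∑ j, uup x j * DB x j)) := by
    intro x
    have e : ∑ k, uup x k * (DA x k + (∑ j, uup x j * DB x j) * u x k
        + B x * (θ x * u x k + acc x k))
        = ∑ k, uup x k * ((1/2) * ((n:ℝ) * DA x k - DB x k)) :=
      Finset.sum_congr rfl fun k _ => by rw [hBianchi x k]
    have lhs : ∑ k, uup x k * (DA x k + (∑ j, uup x j * DB x j) * u x k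
        + B x * (θ x * u x k + acc x k))
        = (∑ j, uup x j * DA x j)
          + (∑ j, uup x j * DB x j) * (∑ k, uup x k * u x k)
          + B x * θ x * (∑ k, uup x k * u x k)
          + B x * (∑ k, uup x k * acc x k) := by
      simp only [Finset.mul_sum, ← Finset.sum_add_distrib]
      exact Finset.sum_congr rfl fun k _ => by ring
    have rhs : ∑ k, uup x k * ((1/2) * ((n:ℝ) * DA x k - DB x k))
        = (1/2) * ((n:ℝ) * (∑ j, uup x j * DA x j) - (∑ j, uup x j * DB x j)) := by
      simp only [Finset.mul_sum, Finset.sum_sub_distrib]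
      rw [Finset.sum_congr rfl fun k _ => (by ring :
        uup x k * ((1/2) * ((n:ℝ) * DA x k - DB x k))
          = (1/2) * ((n:ℝ) * (uup x k * DA x k)) - (1/2) * (uup x k * DB x k))]
      rw [Finset.sum_sub_distrib, ← Finset.mul_sum, ← Finset.mul_sum, ← Finset.mul_sum]
      ring
    rw [lhs, rhs, hunit x, uacc x] at e
    linarith [e]
  -- the three contractions of the divergence identity
  have sum1 : ∀ x k, ∑ j, ∑ l, uup x j * uup x l * DRic x k j l
      = -DA x k + DB x k := by
    intro x k
    have inner : ∀ j, ∑ l, uup x j * uup x l * DRic x k j l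
        = DA x k * (uup x j * u x j) - DB x k * (uup x j * u x j)
          - B x * (uup x j * Du x k j) := by
      intro j
      calc ∑ l, uup x j * uup x l * DRic x k j l
          = (DA x k * uup x j) * (∑ l, uup x l * g x l j)
            + (DB x k * (uup x j * u x j)) * (∑ l, uup x l * u x l)
            + (B x * (uup x j * Du x k j)) * (∑ l, uup x l * u x l)
            + (B x * (uup x j * u x j)) * (∑ l, uup x l * Du x k l) := by
            simp only [Finset.mul_sum, ← Finset.sum_add_distrib]
            exact Finset.sum_congr rfl fun l _ => by rw [hDRic, hgsym x j l]; ring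
        _ = _ := by rw [udotg x j, hunit x, hDnorm x k]; ring
    calc ∑ j, ∑ l, uup x j * uup x l * DRic x k j l
        = DA x k * (∑ j, uup x j * u x j) - DB x k * (∑ j, uup x j * u x j)
          - B x * (∑ j, uup x j * Du x k j) := by
          simp only [inner, Finset.mul_sum, ← Finset.sum_sub_distrib]
      _ = _ := by rw [hunit x, hDnorm x k]; ring
  have sum2 : ∀ x k, ∑ j, ∑ l, uup x j * uup x l * DRic x j k l
      = (∑ j, uup x j * DA x j) * u x k - (∑ j, uup x j * DB x j) * u x k
        - B x * acc x k := by
    intro x k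
    have inner : ∀ j, ∑ l, uup x j * uup x l * DRic x j k l
        = (uup x j * DA x j) * u x k - (uup x j * DB x j) * u x k
          - B x * (uup x j * Du x j k) := by
      intro j
      calc ∑ l, uup x j * uup x l * DRic x j k l
          = (uup x j * DA x j) * (∑ l, uup x l * g x l k)
            + (uup x j * DB x j * u x k) * (∑ l, uup x l * u x l)
            + (B x * (uup x j * Du x j k)) * (∑ l, uup x l * u x l)
            + (B x * (uup x j * u x k)) * (∑ l, uup x l * Du x j l) := by
            simp only [Finset.mul_sum, ← Finset.sum_add_distrib]
            exact Finset.sum_congr rfl fun l _ => by rw [hDRic, hgsym x k l]; ring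
        _ = _ := by rw [udotg x k, hunit x, hDnorm x j]; ring
    calc ∑ j, ∑ l, uup x j * uup x l * DRic x j k l
        = (∑ j, uup x j * DA x j) * u x k - (∑ j, uup x j * DB x j) * u x k
          - B x * (∑ j, uup x j * Du x j k) := by
          simp only [inner, Finset.sum_sub_distrib, Finset.sum_mul, ← Finset.mul_sum]
      _ = _ := by rw [hacc x k]
  have sum3 : ∀ x k, ∑ j, ∑ l, uup x j * uup x l *
        (g x j l * ((n:ℝ) * DA x k - DB x k) - g x k l * ((n:ℝ) * DA x j - DB x j))
      = -((n:ℝ) * DA x k - DB x k)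
        - u x k * ((n:ℝ) * (∑ j, uup x j * DA x j) - (∑ j, uup x j * DB x j)) := by
    intro x k
    have inner : ∀ j, ∑ l, uup x j * uup x l *
          (g x j l * ((n:ℝ) * DA x k - DB x k) - g x k l * ((n:ℝ) * DA x j - DB x j))
        = ((n:ℝ) * DA x k - DB x k) * (uup x j * u x j)
          - u x k * (uup x j * ((n:ℝ) * DA x j - DB x j)) := by
      intro j
      calc ∑ l, uup x j * uup x l *
            (g x j l * ((n:ℝ) * DA x k - DB x k) - g x k l * ((n:ℝ) * DA x j - DB x j))
          = (((n:ℝ) * DA x k - DB x k) * uup x j) * (∑ l, uup x l * g x l j)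
            - ((uup x j * ((n:ℝ) * DA x j - DB x j))) * (∑ l, uup x l * g x l k) := by
            simp only [Finset.mul_sum, ← Finset.sum_sub_distrib]
            exact Finset.sum_congr rfl fun l _ => by rw [hgsym x j l, hgsym x k l]; ring
        _ = _ := by rw [udotg x j, udotg x k]; ring
    calc ∑ j, ∑ l, uup x j * uup x l *
          (g x j l * ((n:ℝ) * DA x k - DB x k) - g x k l * ((n:ℝ) * DA x j - DB x j))
        = ((n:ℝ) * DA x k - DB x k) * (∑ j, uup x j * u x j)
          - u x k * (∑ j, uup x j * ((n:ℝ) * DA x j - DB x j)) := by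
          simp only [inner, Finset.sum_sub_distrib, ← Finset.mul_sum]
      _ = _ := by
          rw [hunit x]
          have : ∑ j, uup x j * ((n:ℝ) * DA x j - DB x j)
              = (n:ℝ) * (∑ j, uup x j * DA x j) - (∑ j, uup x j * DB x j) := by
            simp only [Finset.mul_sum, Finset.sum_sub_distrib]
            rw [Finset.sum_congr rfl fun j _ => (by ring :
              uup x j * ((n:ℝ) * DA x j - DB x j)
                = (n:ℝ) * (uup x j * DA x j) - uup x j * DB x j)]
            rw [Finset.sum_sub_distrib, ← Finset.mul_sum]
          rw [this]; ring
  -- the full contraction of hC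
  have E0 : ∀ x k, (((n:ℝ) - 3)/((n:ℝ) - 2)) *
      ((-DA x k + DB x k)
        - ((∑ j, uup x j * DA x j) * u x k - (∑ j, uup x j * DB x j) * u x k
            - B x * acc x k)
        - (1/(2*((n:ℝ) - 1))) *
          (-((n:ℝ) * DA x k - DB x k)
            - u x k * ((n:ℝ) * (∑ j, uup x j * DA x j) - (∑ j, uup x j * DB x j)))) = 0 := by
    intro x k
    have expand : ∑ j, ∑ l, uup x j * uup x l * divC x j k l
        = (((n:ℝ) - 3)/((n:ℝ) - 2)) *
          ((∑ j, ∑ l, uup x j * uup x l * DRic x k j l)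
            - (∑ j, ∑ l, uup x j * uup x l * DRic x j k l)
            - (1/(2*((n:ℝ) - 1))) * (∑ j, ∑ l, uup x j * uup x l *
              (g x j l * ((n:ℝ) * DA x k - DB x k)
                - g x k l * ((n:ℝ) * DA x j - DB x j)))) := by
      calc ∑ j, ∑ l, uup x j * uup x l * divC x j k l
          = ∑ j, ∑ l, ((((n:ℝ) - 3)/((n:ℝ) - 2)) * (uup x j * uup x l * DRic x k j l)
              - (((n:ℝ) - 3)/((n:ℝ) - 2)) * (uup x j * uup x l * DRic x j k l)
              - (((n:ℝ) - 3)/((n:ℝ) - 2)) * ((1/(2*((n:ℝ) - 1))) *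
                (uup x j * uup x l * (g x j l * ((n:ℝ) * DA x k - DB x k)
                  - g x k l * ((n:ℝ) * DA x j - DB x j))))) :=
            Finset.sum_congr rfl fun j _ => Finset.sum_congr rfl fun l _ => by
              rw [hdivC]; ring
        _ = _ := by
            simp only [Finset.sum_sub_distrib, ← Finset.mul_sum]
            ring
    rw [← sum1 x k, ← sum2 x k, ← sum3 x k, ← expand, hC x k]
  -- cleared-denominator form
  have E1 : ∀ x k, 2*((n:ℝ)-1) *
      ((-DA x k + DB x k)
        - ((∑ j, uup x j * DA x j) * u x k - (∑ j, uup x j * DB x j) * u x k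
            - B x * acc x k))
      + (((n:ℝ) * DA x k - DB x k)
          + u x k * ((n:ℝ) * (∑ j, uup x j * DA x j) - (∑ j, uup x j * DB x j))) = 0 := by
    intro x k
    have h0 := E0 x k
    rw [div_mul_eq_mul_div, div_eq_zero_iff] at h0
    rcases h0 with h0 | h0
    · rw [mul_eq_zero] at h0
      rcases h0 with h0 | h0
      · exact absurd h0 hne3
      · have h2 : (2*((n:ℝ)-1)) ≠ 0 := by positivity
        field_simp at h0
        linarith [h0]
    · exact absurd h0 hne2
  -- key scalar identity: h_k^m ∇_m ((n-2)A+B) = 0 pointwise, in expanded form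
  have key : ∀ x k, (((n:ℝ)-2) * DA x k + DB x k)
      + u x k * (((n:ℝ)-2) * (∑ j, uup x j * DA x j) + (∑ j, uup x j * DB x j)) = 0 := by
    intro x k
    have e1 := E1 x k
    have b1 := hBianchi x k
    have b2 := hB2 x
    have hmul : ((n:ℝ)-2) * ((((n:ℝ)-2) * DA x k + DB x k)
        + u x k * (((n:ℝ)-2) * (∑ j, uup x j * DA x j) + (∑ j, uup x j * DB x j))) = 0 := by
      linear_combination e1 - 2*((n:ℝ)-1) * b1 - 2*((n:ℝ)-1) * u x k * b2
    rcases mul_eq_zero.mp hmul with h0 | h0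
    · exact absurd h0 hne2
    · exact h0
  -- hypothesis of the dichotomy lemma
  have hyp : ∀ x k, ∑ m, hmix x k m * (((n:ℝ) - 2) * DA x m + DB x m) = 0 := by
    intro x k
    have expand : ∑ m, hmix x k m * (((n:ℝ) - 2) * DA x m + DB x m)
        = (((n:ℝ)-2) * DA x k + DB x k)
          + u x k * (((n:ℝ)-2) * (∑ j, uup x j * DA x j) + (∑ j, uup x j * DB x j)) := by
      calc ∑ m, hmix x k m * (((n:ℝ) - 2) * DA x m + DB x m)
          = ∑ m, ((if k = m then (1:ℝ) else 0) * (((n:ℝ) - 2) * DA x m + DB x m)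
              + u x k * (((n:ℝ)-2) * (uup x m * DA x m) + uup x m * DB x m)) := by
            refine Finset.sum_congr rfl fun m _ => ?_
            rw [hdefhmix]; ring
        _ = _ := by
            rw [Finset.sum_add_distrib]
            congr 1
            · simp
            · calc ∑ m, u x k * (((n:ℝ)-2) * (uup x m * DA x m) + uup x m * DB x m)
                  = u x k * ∑ m, (((n:ℝ)-2) * (uup x m * DA x m) + uup x m * DB x m) :=
                    (Finset.mul_sum _ _ _).symm
                _ = _ := by
                    rw [Finset.sum_add_distrib, ← Finset.mul_sum]
    rw [expand, key x k]
  -- apply the dichotomy lemma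
  rcases hLem hyp with hconst | hvort
  · left
    intro x
    have uconst : ((n:ℝ)-2) * (∑ j, uup x j * DA x j) + (∑ j, uup x j * DB x j) = 0 := by
      have : ∑ j, uup x j * (((n:ℝ) - 2) * DA x j + DB x j) = 0 := by
        simp only [hconst, mul_zero, Finset.sum_const_zero]
      calc ((n:ℝ)-2) * (∑ j, uup x j * DA x j) + (∑ j, uup x j * DB x j)
          = ∑ j, (((n:ℝ)-2) * (uup x j * DA x j) + uup x j * DB x j) := by
            rw [Finset.sum_add_distrib, ← Finset.mul_sum]
        _ = ∑ j, uup x j * (((n:ℝ) - 2) * DA x j + DB x j) :=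
            Finset.sum_congr rfl fun j _ => by ring
        _ = 0 := this
    have b2 := hB2 x
    have : B x * θ x = 0 := by linarith [uconst, b2]
    rcases mul_eq_zero.mp this with h0 | h0
    · exact absurd h0 (hB x)
    · exact h0
  · right
    exact hvort
end

section
/- In a perfect-fluid spacetime of dimension n ≥ 4, the velocity field u is shear-free and vorticity-free (σ = 0 and ω = 0) if and only if h_i^l u^j ∇^m C_{jklm} = 0, equivalently u^j (u_i u^l ∇^m C_{jklm} + ∇^m C_{jkim}) = 0. -/
open Finset

theorem shear_and_vorticity_free_iff_weyl_condition
    (M : Type*) (n : ℕ)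
    (g ginv : M → Fin n → Fin n → ℝ)
    (u : M → Fin n → ℝ)
    -- Du x k l  represents  ∇_k u_l
    (Du : M → Fin n → Fin n → ℝ)
    (uup : M → Fin n → ℝ)
    (huup : ∀ x i, uup x i = ∑ j, ginv x i j * u x j)
    -- u is unit timelike : u_k u^k = -1
    (hunit : ∀ x, ∑ k, uup x k * u x k = -1)
    (hgsym : ∀ x i j, g x i j = g x j i)
    (hginvsym : ∀ x i j, ginv x i j = ginv x j i)
    (hginv : ∀ x i j, ∑ m, ginv x i m * g x m j = if i = j then (1:ℝ) else 0)
    -- consequence of metric compatibility and u_k u^k = -1 : u^j ∇_k u_j = 0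
    (hDnorm : ∀ x k, ∑ j, uup x j * Du x k j = 0)
    (hn : 4 ≤ n)
    -- expansion scalar θ = ∇_k u^k
    (θ : M → ℝ) (hθ : ∀ x, θ x = ∑ k, ∑ l, ginv x k l * Du x k l)
    -- projector h_{kl} = g_{kl} + u_k u_l
    (h : M → Fin n → Fin n → ℝ)
    (hdefh : ∀ x k l, h x k l = g x k l + u x k * u x l)
    -- mixed projector h_k{}^i = δ_k^i + u_k u^i
    (hmix : M → Fin n → Fin n → ℝ)
    (hdefhmix : ∀ x k i, hmix x k i = (if k = i then (1:ℝ) else 0) + u x k * uup x i)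
    -- acceleration  \dot u_k = u^m ∇_m u_k
    (acc : M → Fin n → ℝ) (hacc : ∀ x k, acc x k = ∑ m, uup x m * Du x m k)
    -- vorticity ω_{kl} = (1/2) h_k{}^i h_l{}^j (∇_i u_j - ∇_j u_i)
    (ω : M → Fin n → Fin n → ℝ)
    (hω : ∀ x k l, ω x k l =
      (1/2) * ∑ i, ∑ j, hmix x k i * hmix x l j * (Du x i j - Du x j i))
    -- shear σ_{kl} = (1/2) h_k{}^i h_l{}^j (∇_i u_j + ∇_j u_i) - (θ/(n-1)) h_{kl}
    (σ : M → Fin n → Fin n → ℝ)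
    (hσ : ∀ x k l, σ x k l =
      (1/2) * (∑ i, ∑ j, hmix x k i * hmix x l j * (Du x i j + Du x j i))
        - (θ x / ((n:ℝ) - 1)) * h x k l)
    -- perfect-fluid (quasi-Einstein) Ricci tensor : R_{ij} = A g_{ij} + B u_i u_j
    (A B : M → ℝ) (hB : ∀ x, B x ≠ 0)
    -- gradients of the scalars A, B
    (DA DB : M → Fin n → ℝ)
    -- contracted second Bianchi identity ∇^j R_{ij} = (1/2) ∇_i R for
    -- R_{ij} = A g_{ij} + B u_i u_j, R = n A - B (divergence expanded by Leibniz)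
    (hBianchi : ∀ x i, DA x i + (∑ j, uup x j * DB x j) * u x i
        + B x * (θ x * u x i + acc x i) = (1/2) * ((n:ℝ) * DA x i - DB x i))
    -- DRic x k j l  represents  ∇_k R_{jl}, computed by Leibniz from R_{ij} = A g_{ij} + B u_i u_j
    (DRic : M → Fin n → Fin n → Fin n → ℝ)
    (hDRic : ∀ x k j l, DRic x k j l = DA x k * g x j l + DB x k * u x j * u x l
        + B x * (Du x k j * u x l + u x j * Du x k l))
    -- divC x j k l  represents  ∇^m C_{jklm}, with the standard divergence identity
    -- ∇^m C_{jklm} = ((n-3)/(n-2)) [∇_k R_{jl} - ∇_j R_{kl} - (1/(2(n-1)))(g_{jl} ∇_k R - g_{kl} ∇_j R)]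
    (divC : M → Fin n → Fin n → Fin n → ℝ)
    (hdivC : ∀ x j k l, divC x j k l = (((n:ℝ) - 3)/((n:ℝ) - 2)) *
        (DRic x k j l - DRic x j k l - (1/(2*((n:ℝ) - 1))) *
          (g x j l * ((n:ℝ) * DA x k - DB x k) - g x k l * ((n:ℝ) * DA x j - DB x j)))) :
    (((∀ x k l, σ x k l = 0) ∧ (∀ x k l, ω x k l = 0)) ↔
      (∀ x k i, ∑ j, ∑ l, uup x j * hmix x i l * divC x j k l = 0)) ∧
    ((∀ x k i, ∑ j, ∑ l, uup x j * hmix x i l * divC x j k l = 0) ↔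
      (∀ x k i, ∑ j, uup x j *
        (u x i * (∑ l, uup x l * divC x j k l) + divC x j k i) = 0)) := by
  classical
  -- numeric facts
  have hnR : (4:ℝ) ≤ (n:ℝ) := by exact_mod_cast hn
  have hn1 : ((n:ℝ) - 1) ≠ 0 := by linarith
  have hn2 : ((n:ℝ) - 2) ≠ 0 := by linarith
  have hn3 : ((n:ℝ) - 3) ≠ 0 := by linarith
  -- contraction of uup with g in the first slot
  have Fg : ∀ x l, ∑ j, uup x j * g x j l = u x l := by
    intro x l
    have e : ∀ j, uup x j * g x j l = ∑ m, u x m * (ginv x m j * g x j l) := by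
      intro j
      rw [huup, Finset.sum_mul]
      refine Finset.sum_congr rfl fun m _ => ?_
      rw [hginvsym x j m]; ring
    rw [Finset.sum_congr rfl fun j _ => e j, Finset.sum_comm]
    have e2 : ∀ m, (∑ j, u x m * (ginv x m j * g x j l))
        = u x m * (if m = l then (1:ℝ) else 0) := by
      intro m
      rw [← Finset.mul_sum, hginv]
    rw [Finset.sum_congr rfl fun m _ => e2 m]
    simp
  have Fg2 : ∀ x k, ∑ l, uup x l * g x k l = u x k := by
    intro x k
    have e : ∀ l, uup x l * g x k l = uup x l * g x l k := fun l => by rw [hgsym x k l]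
    rw [Finset.sum_congr rfl fun l _ => e l]
    exact Fg x k
  have haccsum : ∀ x k, ∑ j, uup x j * Du x j k = acc x k := fun x k => (hacc x k).symm
  have F4 : ∀ x, ∑ m, uup x m * acc x m = 0 := by
    intro x
    have e : ∀ m, uup x m * acc x m = ∑ j, uup x j * (uup x m * Du x j m) := by
      intro m
      rw [hacc, Finset.mul_sum]
      exact Finset.sum_congr rfl fun j _ => by ring
    rw [Finset.sum_congr rfl fun m _ => e m, Finset.sum_comm]
    have e2 : ∀ j, (∑ m, uup x j * (uup x m * Du x j m)) = 0 := by
      intro j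
      rw [← Finset.mul_sum, hDnorm x j, mul_zero]
    rw [Finset.sum_congr rfl fun j _ => e2 j]
    simp
  -- contractions with the mixed projector (second slot of hmix)
  have Hu : ∀ x i, ∑ l, hmix x i l * u x l = 0 := by
    intro x i
    have e : ∀ l, hmix x i l * u x l
        = (if i = l then u x l else 0) + u x i * (uup x l * u x l) := by
      intro l
      rw [hdefhmix, add_mul, ite_mul, one_mul, zero_mul]
      ring
    rw [Finset.sum_congr rfl fun l _ => e l, Finset.sum_add_distrib,
      ← Finset.mul_sum, hunit]
    simp only [Finset.sum_ite_eq, Finset.mem_univ, if_true]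
    ring
  have Hg : ∀ x k i, ∑ l, hmix x i l * g x k l = g x k i + u x k * u x i := by
    intro x k i
    have e : ∀ l, hmix x i l * g x k l
        = (if i = l then g x k l else 0) + u x i * (uup x l * g x k l) := by
      intro l
      rw [hdefhmix, add_mul, ite_mul, one_mul, zero_mul]
      ring
    rw [Finset.sum_congr rfl fun l _ => e l, Finset.sum_add_distrib,
      ← Finset.mul_sum, Fg2]
    simp only [Finset.sum_ite_eq, Finset.mem_univ, if_true]
    ring
  have HD : ∀ x k i, ∑ l, hmix x i l * Du x k l = Du x k i := by
    intro x k i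
    have e : ∀ l, hmix x i l * Du x k l
        = (if i = l then Du x k l else 0) + u x i * (uup x l * Du x k l) := by
      intro l
      rw [hdefhmix, add_mul, ite_mul, one_mul, zero_mul]
      ring
    rw [Finset.sum_congr rfl fun l _ => e l, Finset.sum_add_distrib,
      ← Finset.mul_sum, hDnorm x k]
    simp only [Finset.sum_ite_eq, Finset.mem_univ, if_true]
    ring
  have Ha : ∀ x i, ∑ l, hmix x i l * acc x l = acc x i := by
    intro x i
    have e : ∀ l, hmix x i l * acc x l
        = (if i = l then acc x l else 0) + u x i * (uup x l * acc x l) := by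
      intro l
      rw [hdefhmix, add_mul, ite_mul, one_mul, zero_mul]
      ring
    rw [Finset.sum_congr rfl fun l _ => e l, Finset.sum_add_distrib,
      ← Finset.mul_sum, F4]
    simp only [Finset.sum_ite_eq, Finset.mem_univ, if_true]
    ring
  have HDfst : ∀ x k i, ∑ a, hmix x k a * Du x a i = Du x k i + u x k * acc x i := by
    intro x k i
    have e : ∀ a, hmix x k a * Du x a i
        = (if k = a then Du x a i else 0) + u x k * (uup x a * Du x a i) := by
      intro a
      rw [hdefhmix, add_mul, ite_mul, one_mul, zero_mul]
      ring
    rw [Finset.sum_congr rfl fun a _ => e a, Finset.sum_add_distrib,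
      ← Finset.mul_sum, haccsum]
    simp only [Finset.sum_ite_eq, Finset.mem_univ, if_true]
  -- closed forms of shear and vorticity
  have DS : ∀ x k l, ∑ i, ∑ j, hmix x k i * hmix x l j * (Du x i j + Du x j i)
      = Du x k l + Du x l k + u x k * acc x l + u x l * acc x k := by
    intro x k l
    have e : ∀ i, ∑ j, hmix x k i * hmix x l j * (Du x i j + Du x j i)
        = hmix x k i * Du x i l + hmix x k i * Du x l i
          + u x l * (hmix x k i * acc x i) := by
      intro i
      have e0 : ∀ j, hmix x k i * hmix x l j * (Du x i j + Du x j i)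
          = hmix x k i * (hmix x l j * Du x i j) + hmix x k i * (hmix x l j * Du x j i) := by
        intro j; ring
      rw [Finset.sum_congr rfl fun j _ => e0 j, Finset.sum_add_distrib,
        ← Finset.mul_sum, ← Finset.mul_sum, HD x i l, HDfst x l i]
      ring
    rw [Finset.sum_congr rfl fun i _ => e i, Finset.sum_add_distrib,
      Finset.sum_add_distrib, ← Finset.mul_sum, HDfst x k l, HD x l k, Ha x k]
    ring
  have DAS : ∀ x k l, ∑ i, ∑ j, hmix x k i * hmix x l j * (Du x i j - Du x j i)
      = Du x k l + u x k * acc x l - Du x l k - u x l * acc x k := by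
    intro x k l
    have e : ∀ i, ∑ j, hmix x k i * hmix x l j * (Du x i j - Du x j i)
        = hmix x k i * Du x i l - hmix x k i * Du x l i
          - u x l * (hmix x k i * acc x i) := by
      intro i
      have e0 : ∀ j, hmix x k i * hmix x l j * (Du x i j - Du x j i)
          = hmix x k i * (hmix x l j * Du x i j) - hmix x k i * (hmix x l j * Du x j i) := by
        intro j; ring
      rw [Finset.sum_congr rfl fun j _ => e0 j, Finset.sum_sub_distrib,
        ← Finset.mul_sum, ← Finset.mul_sum, HD x i l, HDfst x l i]
      ring
    rw [Finset.sum_congr rfl fun i _ => e i, Finset.sum_sub_distrib,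
      Finset.sum_sub_distrib, ← Finset.mul_sum, HDfst x k l, HD x l k, Ha x k]
  have σcf : ∀ x k l, σ x k l
      = (1/2) * (Du x k l + Du x l k + u x k * acc x l + u x l * acc x k)
        - (θ x / ((n:ℝ)-1)) * (g x k l + u x k * u x l) := by
    intro x k l
    rw [hσ, DS, hdefh]
  have ωcf : ∀ x k l, ω x k l
      = (1/2) * (Du x k l + u x k * acc x l - Du x l k - u x l * acc x k) := by
    intro x k l
    rw [hω, DAS]
  -- contracted Bianchi scalar relation
  have BSc : ∀ x, ((n:ℝ)-2) * (∑ j, uup x j * DA x j) + (∑ j, uup x j * DB x j)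
      + 2 * (B x * θ x) = 0 := by
    intro x
    have h1 : ∑ i, uup x i * (DA x i + (∑ j, uup x j * DB x j) * u x i
          + B x * (θ x * u x i + acc x i))
        = ∑ i, uup x i * ((1/2) * ((n:ℝ) * DA x i - DB x i)) :=
      Finset.sum_congr rfl fun i _ => by rw [hBianchi]
    have e1 : ∀ i, uup x i * (DA x i + (∑ j, uup x j * DB x j) * u x i
          + B x * (θ x * u x i + acc x i))
        = (uup x i * DA x i) + ((∑ j, uup x j * DB x j) + B x * θ x) * (uup x i * u x i)
          + B x * (uup x i * acc x i) := by intro i; ring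
    have e2 : ∀ i, uup x i * ((1/2) * ((n:ℝ) * DA x i - DB x i))
        = ((n:ℝ)/2) * (uup x i * DA x i) - (1/2) * (uup x i * DB x i) := by intro i; ring
    rw [Finset.sum_congr rfl fun i _ => e1 i, Finset.sum_congr rfl fun i _ => e2 i] at h1
    rw [Finset.sum_add_distrib, Finset.sum_add_distrib, Finset.sum_sub_distrib,
      ← Finset.mul_sum, ← Finset.mul_sum, ← Finset.mul_sum, ← Finset.mul_sum,
      hunit, F4] at h1
    linear_combination (-2 : ℝ) * h1
  have KK : ∀ x, (-(∑ j, uup x j * DA x j)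
        + ((n:ℝ) * (∑ j, uup x j * DA x j) - (∑ j, uup x j * DB x j)) * (1/(2*((n:ℝ)-1))))
      = B x * θ x * (1/((n:ℝ)-1)) := by
    intro x
    have hb := BSc x
    field_simp
    first
    | linear_combination hb
    | linear_combination (-(n:ℝ)) * hb
    | linear_combination (n:ℝ) * hb
    | nlinarith [hb]
  -- contraction of uup with DRic in various slots
  have CW1 : ∀ x k l, ∑ j, uup x j * DRic x k j l
      = (DA x k - DB x k) * u x l - B x * Du x k l := by
    intro x k l
    have e : ∀ j, uup x j * DRic x k j l
        = DA x k * (uup x j * g x j l) + (DB x k * u x l) * (uup x j * u x j)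
          + (B x * u x l) * (uup x j * Du x k j) + (B x * Du x k l) * (uup x j * u x j) := by
      intro j; rw [hDRic]; ring
    rw [Finset.sum_congr rfl fun j _ => e j, Finset.sum_add_distrib, Finset.sum_add_distrib,
      Finset.sum_add_distrib, ← Finset.mul_sum, ← Finset.mul_sum, ← Finset.mul_sum,
      ← Finset.mul_sum, Fg, hunit, hDnorm]
    ring
  have CW2 : ∀ x k l, ∑ j, uup x j * DRic x j k l
      = (∑ j, uup x j * DA x j) * g x k l + (∑ j, uup x j * DB x j) * (u x k * u x l)
        + B x * (acc x k * u x l + u x k * acc x l) := by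
    intro x k l
    have e : ∀ j, uup x j * DRic x j k l
        = g x k l * (uup x j * DA x j) + (u x k * u x l) * (uup x j * DB x j)
          + (B x * u x l) * (uup x j * Du x j k) + (B x * u x k) * (uup x j * Du x j l) := by
      intro j; rw [hDRic]; ring
    rw [Finset.sum_congr rfl fun j _ => e j, Finset.sum_add_distrib, Finset.sum_add_distrib,
      Finset.sum_add_distrib, ← Finset.mul_sum, ← Finset.mul_sum, ← Finset.mul_sum,
      ← Finset.mul_sum, haccsum, haccsum]
    ring
  -- the u-contracted divergence of Weyl
  have Vcf : ∀ x k l, ∑ j, uup x j * divC x j k l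
      = (((n:ℝ)-3)/((n:ℝ)-2)) *
          ((DA x k - DB x k) * u x l - B x * Du x k l
            - ((∑ j, uup x j * DA x j) * g x k l + (∑ j, uup x j * DB x j) * (u x k * u x l)
                + B x * (acc x k * u x l + u x k * acc x l))
            - (1/(2*((n:ℝ)-1))) *
              (u x l * ((n:ℝ) * DA x k - DB x k)
                - g x k l * ((n:ℝ) * (∑ j, uup x j * DA x j) - (∑ j, uup x j * DB x j)))) := by
    intro x k l
    have e : ∀ j, uup x j * divC x j k l
        = (((n:ℝ)-3)/((n:ℝ)-2)) * (uup x j * DRic x k j l)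
          - (((n:ℝ)-3)/((n:ℝ)-2)) * (uup x j * DRic x j k l)
          - ((((n:ℝ)-3)/((n:ℝ)-2)) * (1/(2*((n:ℝ)-1))) * ((n:ℝ) * DA x k - DB x k))
              * (uup x j * g x j l)
          + ((((n:ℝ)-3)/((n:ℝ)-2)) * (1/(2*((n:ℝ)-1))) * (g x k l * (n:ℝ)))
              * (uup x j * DA x j)
          - ((((n:ℝ)-3)/((n:ℝ)-2)) * (1/(2*((n:ℝ)-1))) * g x k l)
              * (uup x j * DB x j) := by
      intro j; rw [hdivC]; ring
    rw [Finset.sum_congr rfl fun j _ => e j]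
    simp only [Finset.sum_sub_distrib, Finset.sum_add_distrib, ← Finset.mul_sum]
    rw [CW1, CW2, Fg]
    ring
  -- the key identity
  have key : ∀ x k i, (∑ j, ∑ l, uup x j * hmix x i l * divC x j k l)
      = -((((n:ℝ)-3)/((n:ℝ)-2)) * B x) * (σ x k i + ω x k i) := by
    intro x k i
    rw [Finset.sum_comm]
    have e : ∀ l, ∑ j, uup x j * hmix x i l * divC x j k l
        = hmix x i l * ∑ j, uup x j * divC x j k l := by
      intro l
      rw [Finset.mul_sum]
      exact Finset.sum_congr rfl fun j _ => by ring
    rw [Finset.sum_congr rfl fun l _ => e l]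
    have e2 : ∀ l, hmix x i l * (∑ j, uup x j * divC x j k l)
        = ((((n:ℝ)-3)/((n:ℝ)-2)) * ((DA x k - DB x k)
              - (∑ j, uup x j * DB x j) * u x k - B x * acc x k
              - (1/(2*((n:ℝ)-1))) * ((n:ℝ) * DA x k - DB x k))) * (hmix x i l * u x l)
          + (-((((n:ℝ)-3)/((n:ℝ)-2)) * B x)) * (hmix x i l * Du x k l)
          + ((((n:ℝ)-3)/((n:ℝ)-2)) * (-(∑ j, uup x j * DA x j)
              + ((n:ℝ) * (∑ j, uup x j * DA x j) - (∑ j, uup x j * DB x j))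
                * (1/(2*((n:ℝ)-1))))) * (hmix x i l * g x k l)
          + (-((((n:ℝ)-3)/((n:ℝ)-2)) * (B x * u x k))) * (hmix x i l * acc x l) := by
      intro l
      rw [Vcf]
      ring
    rw [Finset.sum_congr rfl fun l _ => e2 l]
    simp only [Finset.sum_add_distrib]
    rw [← Finset.mul_sum, ← Finset.mul_sum, ← Finset.mul_sum, ← Finset.mul_sum,
      Hu, HD, Hg, Ha, σcf, ωcf]
    have hk := KK x
    linear_combination ((((n:ℝ)-3)/((n:ℝ)-2)) * (g x k i + u x k * u x i)) * hk
  -- assemble the statement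
  constructor
  · constructor
    · rintro ⟨hs, hw⟩ x k i
      rw [key x k i, hs x k i, hw x k i]
      ring
    · intro hT
      have hso : ∀ x k l, σ x k l + ω x k l = 0 := by
        intro x k l
        have h0 := hT x k l
        rw [key x k l] at h0
        have hc : -((((n:ℝ)-3)/((n:ℝ)-2)) * B x) ≠ 0 :=
          neg_ne_zero.mpr (mul_ne_zero (div_ne_zero hn3 hn2) (hB x))
        exact (mul_eq_zero.mp h0).resolve_left hc
      have hσs : ∀ x k l, σ x k l = σ x l k := by
        intro x k l
        rw [σcf x k l, σcf x l k, hgsym x k l]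
        ring
      have hωa : ∀ x k l, ω x k l = -ω x l k := by
        intro x k l
        rw [ωcf x k l, ωcf x l k]
        ring
      constructor
      · intro x k l
        have h1 := hso x k l
        have h2 := hso x l k
        have h3 := hσs x k l
        have h4 := hωa x k l
        linarith
      · intro x k l
        have h1 := hso x k l
        have h2 := hso x l k
        have h3 := hσs x k l
        have h4 := hωa x k l
        linarith
  · have eq2 : ∀ x k i, (∑ j, ∑ l, uup x j * hmix x i l * divC x j k l)
        = ∑ j, uup x j * (u x i * (∑ l, uup x l * divC x j k l) + divC x j k i) := by
      intro x k i
      refine Finset.sum_congr rfl fun j _ => ?_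
      have e : ∀ l, uup x j * hmix x i l * divC x j k l
          = (if i = l then uup x j * divC x j k l else 0)
            + (uup x j * u x i) * (uup x l * divC x j k l) := by
        intro l
        rw [hdefhmix]
        rcases eq_or_ne i l with h' | h'
        · simp only [h', if_pos rfl, if_true]
          ring
        · simp only [if_neg h']
          ring
      rw [Finset.sum_congr rfl fun l _ => e l, Finset.sum_add_distrib, ← Finset.mul_sum]
      simp only [Finset.sum_ite_eq, Finset.mem_univ, if_true]
      ring
    constructor
    · intro H x k i
      rw [← eq2 x k i]
      exact H x k i
    · intro H x k i
      rw [eq2 x k i]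
      exact H x k i
end

section
/- Let M be a perfect-fluid spacetime (R_{ij} = A g_{ij} + B u_i u_j, B ≠ 0) whose Ricci tensor is recurrent: ∇_k R_{jl} − ∇_j R_{kl} = η_k R_{jl} − η_j R_{kl} for a nonzero 1-form η. Then u^j ∇_m C_{jkl}{}^m = −((n−3)/(n−1)) B u_l h_k^m η_m; in particular h_i^l u^j ∇^m C_{jklm} = 0, so the shear and vorticity of u both vanish. -/
open Finset

theorem recurrent_ricci_perfect_fluid
    (M : Type*) (n : ℕ)
    (g ginv : M → Fin n → Fin n → ℝ)
    (u : M → Fin n → ℝ)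
    -- Du x k l  represents  ∇_k u_l
    (Du : M → Fin n → Fin n → ℝ)
    (uup : M → Fin n → ℝ)
    (huup : ∀ x i, uup x i = ∑ j, ginv x i j * u x j)
    -- u is unit timelike : u_k u^k = -1
    (hunit : ∀ x, ∑ k, uup x k * u x k = -1)
    (hgsym : ∀ x i j, g x i j = g x j i)
    (hginvsym : ∀ x i j, ginv x i j = ginv x j i)
    (hginv : ∀ x i j, ∑ m, ginv x i m * g x m j = if i = j then (1:ℝ) else 0)
    -- consequence of metric compatibility and u_k u^k = -1 : u^j ∇_k u_j = 0
    (hDnorm : ∀ x k, ∑ j, uup x j * Du x k j = 0)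
    (hn : 4 ≤ n)
    -- expansion scalar θ = ∇_k u^k
    (θ : M → ℝ) (hθ : ∀ x, θ x = ∑ k, ∑ l, ginv x k l * Du x k l)
    -- projector h_{kl} = g_{kl} + u_k u_l
    (h : M → Fin n → Fin n → ℝ)
    (hdefh : ∀ x k l, h x k l = g x k l + u x k * u x l)
    -- mixed projector h_k{}^i = δ_k^i + u_k u^i
    (hmix : M → Fin n → Fin n → ℝ)
    (hdefhmix : ∀ x k i, hmix x k i = (if k = i then (1:ℝ) else 0) + u x k * uup x i)
    -- acceleration  \dot u_k = u^m ∇_m u_k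
    (acc : M → Fin n → ℝ) (hacc : ∀ x k, acc x k = ∑ m, uup x m * Du x m k)
    -- vorticity ω_{kl} = (1/2) h_k{}^i h_l{}^j (∇_i u_j - ∇_j u_i)
    (ω : M → Fin n → Fin n → ℝ)
    (hω : ∀ x k l, ω x k l =
      (1/2) * ∑ i, ∑ j, hmix x k i * hmix x l j * (Du x i j - Du x j i))
    -- shear σ_{kl} = (1/2) h_k{}^i h_l{}^j (∇_i u_j + ∇_j u_i) - (θ/(n-1)) h_{kl}
    (σ : M → Fin n → Fin n → ℝ)
    (hσ : ∀ x k l, σ x k l =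
      (1/2) * (∑ i, ∑ j, hmix x k i * hmix x l j * (Du x i j + Du x j i))
        - (θ x / ((n:ℝ) - 1)) * h x k l)
    -- perfect-fluid (quasi-Einstein) Ricci tensor : R_{ij} = A g_{ij} + B u_i u_j
    (A B : M → ℝ) (hB : ∀ x, B x ≠ 0)
    -- gradients of the scalars A, B
    (DA DB : M → Fin n → ℝ)
    -- contracted second Bianchi identity ∇^j R_{ij} = (1/2) ∇_i R for
    -- R_{ij} = A g_{ij} + B u_i u_j, R = n A - B (divergence expanded by Leibniz)
    (hBianchi : ∀ x i, DA x i + (∑ j, uup x j * DB x j) * u x i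
        + B x * (θ x * u x i + acc x i) = (1/2) * ((n:ℝ) * DA x i - DB x i))
    -- DRic x k j l  represents  ∇_k R_{jl}, computed by Leibniz from R_{ij} = A g_{ij} + B u_i u_j
    (DRic : M → Fin n → Fin n → Fin n → ℝ)
    (hDRic : ∀ x k j l, DRic x k j l = DA x k * g x j l + DB x k * u x j * u x l
        + B x * (Du x k j * u x l + u x j * Du x k l))
    -- divC x j k l  represents  ∇^m C_{jklm}, with the standard divergence identity
    -- ∇^m C_{jklm} = ((n-3)/(n-2)) [∇_k R_{jl} - ∇_j R_{kl} - (1/(2(n-1)))(g_{jl} ∇_k R - g_{kl} ∇_j R)]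
    (divC : M → Fin n → Fin n → Fin n → ℝ)
    (hdivC : ∀ x j k l, divC x j k l = (((n:ℝ) - 3)/((n:ℝ) - 2)) *
        (DRic x k j l - DRic x j k l - (1/(2*((n:ℝ) - 1))) *
          (g x j l * ((n:ℝ) * DA x k - DB x k) - g x k l * ((n:ℝ) * DA x j - DB x j))))
    -- Ric is recurrent with nonzero 1-form η
    (η : M → Fin n → ℝ) (hη : ∃ x k, η x k ≠ 0)
    (hrec : ∀ x k j l, DRic x k j l - DRic x j k l =
      η x k * (A x * g x j l + B x * u x j * u x l)
        - η x j * (A x * g x k l + B x * u x k * u x l)) :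
    (∀ x k l, ∑ j, uup x j * divC x j k l =
        -(((n:ℝ) - 3)/((n:ℝ) - 1)) * B x * u x l * (∑ m, hmix x k m * η x m)) ∧
    (∀ x k i, ∑ j, ∑ l, uup x j * hmix x i l * divC x j k l = 0) ∧
    (∀ x k l, σ x k l = 0) ∧ (∀ x k l, ω x k l = 0) := by
  have hn4 : (4:ℝ) ≤ (n:ℝ) := by exact_mod_cast hn
  have hn1 : ((n:ℝ) - 1) ≠ 0 := by intro hc; linarith
  have hn2 : ((n:ℝ) - 2) ≠ 0 := by intro hc; linarith
  -- basic contractions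
  have hL1 : ∀ x l, ∑ j, uup x j * g x j l = u x l := by
    intro x l
    calc ∑ j, uup x j * g x j l
        = ∑ j, ∑ i, u x i * (ginv x i j * g x j l) := by
          refine Finset.sum_congr rfl fun j _ => ?_
          rw [huup, Finset.sum_mul]
          refine Finset.sum_congr rfl fun i _ => ?_
          rw [hginvsym]; ring
      _ = ∑ i, u x i * ∑ j, ginv x i j * g x j l := by
          rw [Finset.sum_comm]
          exact Finset.sum_congr rfl fun i _ => by rw [Finset.mul_sum]
      _ = ∑ i, u x i * (if i = l then (1:ℝ) else 0) :=
          Finset.sum_congr rfl fun i _ => by rw [hginv]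
      _ = u x l := by simp
  have hL1' : ∀ x k, ∑ l, uup x l * g x k l = u x k := by
    intro x k
    calc ∑ l, uup x l * g x k l = ∑ l, uup x l * g x l k :=
          Finset.sum_congr rfl fun l _ => by rw [hgsym]
      _ = u x k := hL1 x k
  have ha4 : ∀ x k, ∑ j, uup x j * Du x j k = acc x k := fun x k => (hacc x k).symm
  have ha5 : ∀ x, ∑ l, uup x l * acc x l = 0 := by
    intro x
    calc ∑ l, uup x l * acc x l = ∑ l, uup x l * ∑ m, uup x m * Du x m l := by
          exact Finset.sum_congr rfl fun l _ => by rw [hacc]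
      _ = ∑ m, uup x m * ∑ l, uup x l * Du x m l := by
          simp only [Finset.mul_sum]
          rw [Finset.sum_comm]
          exact Finset.sum_congr rfl fun m _ => Finset.sum_congr rfl fun l _ => by ring
      _ = 0 := by simp [hDnorm]
  have hsymh : ∀ x k l, h x k l = h x l k := by
    intro x k l; rw [hdefh, hdefh, hgsym]; ring
  have hL4 : ∀ x k, ∑ l, uup x l * h x k l = 0 := by
    intro x k
    calc ∑ l, uup x l * h x k l
        = ∑ l, (uup x l * g x k l + u x k * (uup x l * u x l)) :=
          Finset.sum_congr rfl fun l _ => by rw [hdefh]; ring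
      _ = (∑ l, uup x l * g x k l) + u x k * (∑ l, uup x l * u x l) := by
          rw [Finset.sum_add_distrib, ← Finset.mul_sum]
      _ = 0 := by rw [hL1', hunit]; ring
  have hc1 : ∀ x k, ∑ i, hmix x k i * u x i = 0 := by
    intro x k
    calc ∑ i, hmix x k i * u x i
        = ∑ i, ((if k = i then (1:ℝ) else 0) * u x i + u x k * (uup x i * u x i)) :=
          Finset.sum_congr rfl fun i _ => by rw [hdefhmix]; ring
      _ = (∑ i, (if k = i then (1:ℝ) else 0) * u x i) + u x k * (∑ i, uup x i * u x i) := by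
          rw [Finset.sum_add_distrib, ← Finset.mul_sum]
      _ = 0 := by rw [hunit]; simp
  have hc3 : ∀ x k, ∑ m, hmix x k m * η x m = η x k + u x k * (∑ j, uup x j * η x j) := by
    intro x k
    calc ∑ m, hmix x k m * η x m
        = ∑ m, ((if k = m then (1:ℝ) else 0) * η x m + u x k * (uup x m * η x m)) :=
          Finset.sum_congr rfl fun m _ => by rw [hdefhmix]; ring
      _ = (∑ m, (if k = m then (1:ℝ) else 0) * η x m) + u x k * (∑ m, uup x m * η x m) := by
          rw [Finset.sum_add_distrib, ← Finset.mul_sum]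
      _ = _ := by simp
  have hcA : ∀ x a b, ∑ i, hmix x a i * h x i b = h x a b := by
    intro x a b
    calc ∑ i, hmix x a i * h x i b
        = ∑ i, ((if a = i then (1:ℝ) else 0) * h x i b + u x a * (uup x i * h x b i)) :=
          Finset.sum_congr rfl fun i _ => by rw [hdefhmix, hsymh x i b]; ring
      _ = (∑ i, (if a = i then (1:ℝ) else 0) * h x i b) + u x a * (∑ i, uup x i * h x b i) := by
          rw [Finset.sum_add_distrib, ← Finset.mul_sum]
      _ = h x a b := by rw [hL4]; simp
  have hcB : ∀ x a b, ∑ i, hmix x a i * h x b i = h x a b := by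
    intro x a b
    calc ∑ i, hmix x a i * h x b i = ∑ i, hmix x a i * h x i b :=
          Finset.sum_congr rfl fun i _ => by rw [hsymh x b i]
      _ = h x a b := hcA x a b
  have ha7 : ∀ x j, ∑ l, ginv x j l * u x l = uup x j := fun x j => (huup x j).symm
  have ha6 : ∀ x l, ∑ j, ginv x j l * u x j = uup x l := by
    intro x l
    calc ∑ j, ginv x j l * u x j = ∑ j, ginv x l j * u x j :=
          Finset.sum_congr rfl fun j _ => by rw [hginvsym]
      _ = uup x l := (huup x l).symm
  have hL8 : ∀ x j k, ∑ l, ginv x j l * g x k l = if j = k then (1:ℝ) else 0 := by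
    intro x j k
    calc ∑ l, ginv x j l * g x k l = ∑ l, ginv x j l * g x l k :=
          Finset.sum_congr rfl fun l _ => by rw [hgsym]
      _ = _ := hginv x j k
  have hvu : ∀ x (v : Fin n → ℝ), ∑ j, ∑ l, ginv x j l * (v j * u x l) = ∑ j, uup x j * v j := by
    intro x v
    refine Finset.sum_congr rfl fun j _ => ?_
    calc ∑ l, ginv x j l * (v j * u x l) = v j * ∑ l, ginv x j l * u x l := by
          rw [Finset.mul_sum]; exact Finset.sum_congr rfl fun l _ => by ring
      _ = uup x j * v j := by rw [ha7]; ring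
  have hvu2 : ∀ x (v : Fin n → ℝ), ∑ j, ∑ l, ginv x j l * (u x j * v l) = ∑ l, uup x l * v l := by
    intro x v
    rw [Finset.sum_comm]
    refine Finset.sum_congr rfl fun l _ => ?_
    calc ∑ j, ginv x j l * (u x j * v l) = v l * ∑ j, ginv x j l * u x j := by
          rw [Finset.mul_sum]; exact Finset.sum_congr rfl fun j _ => by ring
      _ = uup x l * v l := by rw [ha6]; ring
  have hvg : ∀ x k (v : Fin n → ℝ), ∑ j, ∑ l, ginv x j l * (v j * g x k l) = v k := by
    intro x k v
    calc ∑ j, ∑ l, ginv x j l * (v j * g x k l)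
        = ∑ j, v j * (if j = k then (1:ℝ) else 0) := by
          refine Finset.sum_congr rfl fun j _ => ?_
          rw [← hL8 x j k, Finset.mul_sum]
          exact Finset.sum_congr rfl fun l _ => by ring
      _ = v k := by simp
  have b1 : ∀ x, ∑ j, ∑ l, ginv x j l * g x j l = (n:ℝ) := by
    intro x
    calc ∑ j, ∑ l, ginv x j l * g x j l = ∑ j, ∑ l, ginv x j l * g x l j :=
          Finset.sum_congr rfl fun j _ => Finset.sum_congr rfl fun l _ => by rw [hgsym]
      _ = ∑ _j : Fin n, (1:ℝ) := Finset.sum_congr rfl fun j _ => by rw [hginv]; simp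
      _ = (n:ℝ) := by simp
  -- contraction of the recurrence with uup over j
  have C1 : ∀ x k l, ∑ j, uup x j * (DRic x k j l - DRic x j k l)
      = (A x - B x) * η x k * u x l
        - (∑ j, uup x j * η x j) * (A x * g x k l + B x * u x k * u x l) := by
    intro x k l
    calc ∑ j, uup x j * (DRic x k j l - DRic x j k l)
        = ∑ j, uup x j * (η x k * (A x * g x j l + B x * u x j * u x l)
            - η x j * (A x * g x k l + B x * u x k * u x l)) :=
          Finset.sum_congr rfl fun j _ => by rw [hrec]
      _ = (η x k * A x) * (∑ j, uup x j * g x j l)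
          + (η x k * B x * u x l) * (∑ j, uup x j * u x j)
          - (A x * g x k l + B x * u x k * u x l) * (∑ j, uup x j * η x j) := by
          simp only [Finset.mul_sum, ← Finset.sum_add_distrib, ← Finset.sum_sub_distrib]
          exact Finset.sum_congr rfl fun j _ => by ring
      _ = _ := by rw [hL1, hunit]; ring
  have CL : ∀ x k l, ∑ j, uup x j * (DRic x k j l - DRic x j k l)
      = (DA x k - DB x k) * u x l - B x * Du x k l
        - (∑ j, uup x j * DA x j) * g x k l - (∑ j, uup x j * DB x j) * (u x k * u x l)
        - B x * acc x k * u x l - B x * u x k * acc x l := by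
    intro x k l
    calc ∑ j, uup x j * (DRic x k j l - DRic x j k l)
        = DA x k * (∑ j, uup x j * g x j l)
          + (DB x k * u x l) * (∑ j, uup x j * u x j)
          + (B x * u x l) * (∑ j, uup x j * Du x k j)
          + (B x * Du x k l) * (∑ j, uup x j * u x j)
          - g x k l * (∑ j, uup x j * DA x j)
          - (u x k * u x l) * (∑ j, uup x j * DB x j)
          - (B x * u x l) * (∑ j, uup x j * Du x j k)
          - (B x * u x k) * (∑ j, uup x j * Du x j l) := by
          simp only [Finset.mul_sum, ← Finset.sum_add_distrib, ← Finset.sum_sub_distrib]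
          exact Finset.sum_congr rfl fun j _ => by rw [hDRic, hDRic]; ring
      _ = _ := by rw [hL1, hunit, hDnorm, ha4, ha4]; ring
  have Ee : ∀ x k l, (DA x k - DB x k) * u x l - B x * Du x k l
        - (∑ j, uup x j * DA x j) * g x k l - (∑ j, uup x j * DB x j) * (u x k * u x l)
        - B x * acc x k * u x l - B x * u x k * acc x l
      = (A x - B x) * η x k * u x l
        - (∑ j, uup x j * η x j) * (A x * g x k l + B x * u x k * u x l) :=
    fun x k l => (CL x k l).symm.trans (C1 x k l)
  -- contract Ee with uup over l to get F1
  have F1 : ∀ x k, DA x k - DB x k = (A x - B x) * η x k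
      + ((∑ j, uup x j * DB x j) - (∑ j, uup x j * DA x j)) * u x k
      + B x * acc x k + (∑ j, uup x j * η x j) * (A x - B x) * u x k := by
    intro x k
    have eL2 : ∑ l, uup x l * ((DA x k - DB x k) * u x l - B x * Du x k l
        - (∑ j, uup x j * DA x j) * g x k l - (∑ j, uup x j * DB x j) * (u x k * u x l)
        - B x * acc x k * u x l - B x * u x k * acc x l)
        = (DA x k - DB x k) * (∑ l, uup x l * u x l) - B x * (∑ l, uup x l * Du x k l)
          - (∑ j, uup x j * DA x j) * (∑ l, uup x l * g x k l)
          - ((∑ j, uup x j * DB x j) * u x k) * (∑ l, uup x l * u x l)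
          - (B x * acc x k) * (∑ l, uup x l * u x l)
          - (B x * u x k) * (∑ l, uup x l * acc x l) := by
      simp only [Finset.mul_sum, ← Finset.sum_add_distrib, ← Finset.sum_sub_distrib]
      exact Finset.sum_congr rfl fun l _ => by ring
    have eR2 : ∑ l, uup x l * ((A x - B x) * η x k * u x l
        - (∑ j, uup x j * η x j) * (A x * g x k l + B x * u x k * u x l))
        = ((A x - B x) * η x k) * (∑ l, uup x l * u x l)
          - ((∑ j, uup x j * η x j) * A x) * (∑ l, uup x l * g x k l)
          - ((∑ j, uup x j * η x j) * B x * u x k) * (∑ l, uup x l * u x l) := by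
      simp only [Finset.mul_sum, ← Finset.sum_add_distrib, ← Finset.sum_sub_distrib]
      exact Finset.sum_congr rfl fun l _ => by ring
    have e2 := eL2.symm.trans
      ((Finset.sum_congr rfl fun l _ =>
        congrArg (fun t => uup x l * t) (Ee x k l)).trans eR2)
    rw [hunit x, hDnorm x k, hL1' x k, ha5 x] at e2
    linear_combination -e2
  -- the key formula for B * Du
  have hD : ∀ x k l, B x * Du x k l
      = (A x * (∑ j, uup x j * η x j) - (∑ j, uup x j * DA x j)) * h x k l
        - B x * (u x k * acc x l) := by
    intro x k l
    rw [hdefh]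
    linear_combination u x l * F1 x k - Ee x k l
  -- contraction of the recurrence with ginv over (j,l)
  have erec : ∀ x k, ∑ j, ∑ l, ginv x j l * (DRic x k j l - DRic x j k l)
      = ∑ j, ∑ l, ginv x j l * (η x k * (A x * g x j l + B x * u x j * u x l)
          - η x j * (A x * g x k l + B x * u x k * u x l)) :=
    fun x k => Finset.sum_congr rfl fun j _ => Finset.sum_congr rfl fun l _ => by rw [hrec]
  have C4 : ∀ x k, ∑ j, ∑ l, ginv x j l * (DRic x k j l - DRic x j k l)
      = ((n:ℝ) * DA x k - DB x k) - DA x k - u x k * (∑ j, uup x j * DB x j)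
        - B x * acc x k - B x * u x k * θ x := by
    intro x k
    calc ∑ j, ∑ l, ginv x j l * (DRic x k j l - DRic x j k l)
        = DA x k * (∑ j, ∑ l, ginv x j l * g x j l)
          + DB x k * (∑ j, ∑ l, ginv x j l * (u x j * u x l))
          + B x * (∑ j, ∑ l, ginv x j l * (Du x k j * u x l))
          + B x * (∑ j, ∑ l, ginv x j l * (u x j * Du x k l))
          - (∑ j, ∑ l, ginv x j l * (DA x j * g x k l))
          - u x k * (∑ j, ∑ l, ginv x j l * (DB x j * u x l))
          - B x * (∑ j, ∑ l, ginv x j l * (Du x j k * u x l))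
          - (B x * u x k) * (∑ j, ∑ l, ginv x j l * Du x j l) := by
          simp only [Finset.mul_sum, ← Finset.sum_add_distrib, ← Finset.sum_sub_distrib]
          exact Finset.sum_congr rfl fun j _ => Finset.sum_congr rfl fun l _ => by
            rw [hDRic, hDRic]; ring
      _ = _ := by
          rw [b1, hvu x (u x), hvu x (fun j => Du x k j), hvu2 x (fun l => Du x k l),
            hvg x k (DA x), hvu x (DB x), hvu x (fun j => Du x j k), ← hθ,
            hunit, hDnorm, ha4]
          ring
  have C4R : ∀ x k, ∑ j, ∑ l, ginv x j l * (η x k * (A x * g x j l + B x * u x j * u x l)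
          - η x j * (A x * g x k l + B x * u x k * u x l))
      = η x k * ((n:ℝ) * A x - B x) - A x * η x k
        - B x * u x k * (∑ j, uup x j * η x j) := by
    intro x k
    calc ∑ j, ∑ l, ginv x j l * (η x k * (A x * g x j l + B x * u x j * u x l)
          - η x j * (A x * g x k l + B x * u x k * u x l))
        = (η x k * A x) * (∑ j, ∑ l, ginv x j l * g x j l)
          + (η x k * B x) * (∑ j, ∑ l, ginv x j l * (u x j * u x l))
          - A x * (∑ j, ∑ l, ginv x j l * (η x j * g x k l))
          - (B x * u x k) * (∑ j, ∑ l, ginv x j l * (η x j * u x l)) := by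
          simp only [Finset.mul_sum, ← Finset.sum_add_distrib, ← Finset.sum_sub_distrib]
          exact Finset.sum_congr rfl fun j _ => Finset.sum_congr rfl fun l _ => by ring
      _ = _ := by
          rw [b1, hvu x (u x), hvg x k (η x), hvu x (η x), hunit]
          ring
  have F6 : ∀ x k, (n:ℝ) * DA x k - DB x k
      = 2 * (((n:ℝ) - 1) * A x - B x) * η x k
        - 2 * B x * (∑ j, uup x j * η x j) * u x k := by
    intro x k
    have e : ((n:ℝ) * DA x k - DB x k) - DA x k - u x k * (∑ j, uup x j * DB x j)
        - B x * acc x k - B x * u x k * θ x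
        = η x k * ((n:ℝ) * A x - B x) - A x * η x k
          - B x * u x k * (∑ j, uup x j * η x j) :=
      (C4 x k).symm.trans ((erec x k).trans (C4R x k))
    linear_combination 2 * e + 2 * hBianchi x k
  have C2 : ∀ x, ∑ j, uup x j * ((n:ℝ) * DA x j - DB x j)
      = 2 * ((n:ℝ) - 1) * A x * (∑ j, uup x j * η x j) := by
    intro x
    calc ∑ j, uup x j * ((n:ℝ) * DA x j - DB x j)
        = ∑ j, uup x j * (2 * (((n:ℝ) - 1) * A x - B x) * η x j
            - 2 * B x * (∑ i, uup x i * η x i) * u x j) :=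
          Finset.sum_congr rfl fun j _ => by rw [F6]
      _ = (2 * (((n:ℝ) - 1) * A x - B x)) * (∑ j, uup x j * η x j)
          - (2 * B x * (∑ i, uup x i * η x i)) * (∑ j, uup x j * u x j) := by
          simp only [Finset.mul_sum, ← Finset.sum_sub_distrib]
          exact Finset.sum_congr rfl fun j _ => by ring
      _ = _ := by rw [hunit]; ring
  -- Goal 1
  have K1 : ∀ x k l, ∑ j, uup x j * divC x j k l
      = -(((n:ℝ) - 3)/((n:ℝ) - 1)) * B x * u x l * (∑ m, hmix x k m * η x m) := by
    intro x k l
    calc ∑ j, uup x j * divC x j k l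
        = ∑ j, ((((n:ℝ) - 3)/((n:ℝ) - 2)) * (uup x j * (DRic x k j l - DRic x j k l))
            - (((n:ℝ) - 3)/((n:ℝ) - 2)) * (1/(2*((n:ℝ) - 1))) *
                (((n:ℝ) * DA x k - DB x k) * (uup x j * g x j l))
            + (((n:ℝ) - 3)/((n:ℝ) - 2)) * (1/(2*((n:ℝ) - 1))) *
                (g x k l * (uup x j * ((n:ℝ) * DA x j - DB x j)))) :=
          Finset.sum_congr rfl fun j _ => by rw [hdivC]; ring
      _ = (((n:ℝ) - 3)/((n:ℝ) - 2)) * (∑ j, uup x j * (DRic x k j l - DRic x j k l))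
          - (((n:ℝ) - 3)/((n:ℝ) - 2)) * (1/(2*((n:ℝ) - 1))) *
              (((n:ℝ) * DA x k - DB x k) * (∑ j, uup x j * g x j l))
          + (((n:ℝ) - 3)/((n:ℝ) - 2)) * (1/(2*((n:ℝ) - 1))) *
              (g x k l * (∑ j, uup x j * ((n:ℝ) * DA x j - DB x j))) := by
          simp only [Finset.mul_sum, ← Finset.sum_add_distrib, ← Finset.sum_sub_distrib]
      _ = _ := by
          rw [C1, hL1, C2, hc3, F6]
          field_simp
          ring
  -- Goal 2
  have K2 : ∀ x k i, ∑ j, ∑ l, uup x j * hmix x i l * divC x j k l = 0 := by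
    intro x k i
    calc ∑ j, ∑ l, uup x j * hmix x i l * divC x j k l
        = ∑ l, hmix x i l * ∑ j, uup x j * divC x j k l := by
          rw [Finset.sum_comm]
          refine Finset.sum_congr rfl fun l _ => ?_
          rw [Finset.mul_sum]
          exact Finset.sum_congr rfl fun j _ => by ring
      _ = ∑ l, (-(((n:ℝ) - 3)/((n:ℝ) - 1)) * B x * (∑ m, hmix x k m * η x m))
            * (hmix x i l * u x l) :=
          Finset.sum_congr rfl fun l _ => by rw [K1]; ring
      _ = (-(((n:ℝ) - 3)/((n:ℝ) - 1)) * B x * (∑ m, hmix x k m * η x m))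
            * (∑ l, hmix x i l * u x l) := (Finset.mul_sum _ _ _).symm
      _ = 0 := by rw [hc1]; ring
  -- expansion relation
  have F2 : ∀ x, B x * θ x
      = ((n:ℝ) - 1) * (A x * (∑ j, uup x j * η x j) - (∑ j, uup x j * DA x j)) := by
    intro x
    have bh : ∑ j, ∑ l, ginv x j l * h x j l = (n:ℝ) - 1 := by
      calc ∑ j, ∑ l, ginv x j l * h x j l
          = ∑ j, ∑ l, (ginv x j l * g x j l + ginv x j l * (u x j * u x l)) :=
            Finset.sum_congr rfl fun j _ => Finset.sum_congr rfl fun l _ => by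
              rw [hdefh]; ring
        _ = (∑ j, ∑ l, ginv x j l * g x j l) + (∑ j, ∑ l, ginv x j l * (u x j * u x l)) := by
            simp only [Finset.sum_add_distrib]
        _ = _ := by rw [b1, hvu x (u x), hunit]; ring
    calc B x * θ x = ∑ j, ∑ l, ginv x j l * (B x * Du x j l) := by
          rw [hθ, Finset.mul_sum]
          refine Finset.sum_congr rfl fun j _ => ?_
          rw [Finset.mul_sum]
          exact Finset.sum_congr rfl fun l _ => by ring
      _ = ∑ j, ∑ l, ((A x * (∑ i, uup x i * η x i) - (∑ i, uup x i * DA x i))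
              * (ginv x j l * h x j l) - B x * (ginv x j l * (u x j * acc x l))) :=
          Finset.sum_congr rfl fun j _ => Finset.sum_congr rfl fun l _ => by
            rw [hD]; ring
      _ = (A x * (∑ i, uup x i * η x i) - (∑ i, uup x i * DA x i))
            * (∑ j, ∑ l, ginv x j l * h x j l)
          - B x * (∑ j, ∑ l, ginv x j l * (u x j * acc x l)) := by
          simp only [Finset.mul_sum, ← Finset.sum_sub_distrib]
      _ = _ := by rw [bh, hvu2 x (acc x), ha5]; ring
  -- projected Du
  have F3 : ∀ x k l, B x * (∑ i, ∑ j, hmix x k i * hmix x l j * Du x i j)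
      = (A x * (∑ i, uup x i * η x i) - (∑ i, uup x i * DA x i)) * h x k l := by
    intro x k l
    obtain ⟨P, hP⟩ : ∃ P, P = A x * (∑ i, uup x i * η x i) - (∑ i, uup x i * DA x i) :=
      ⟨_, rfl⟩
    obtain ⟨C, hC⟩ : ∃ C, C = ∑ j, hmix x l j * acc x j := ⟨_, rfl⟩
    have hD' : ∀ a b, B x * Du x a b = P * h x a b - B x * (u x a * acc x b) :=
      fun a b => by rw [hP]; exact hD x a b
    rw [← hP]
    calc B x * (∑ i, ∑ j, hmix x k i * hmix x l j * Du x i j)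
        = ∑ i, ∑ j, hmix x k i * hmix x l j * (B x * Du x i j) := by
          rw [Finset.mul_sum]
          refine Finset.sum_congr rfl fun i _ => ?_
          rw [Finset.mul_sum]
          exact Finset.sum_congr rfl fun j _ => by ring
      _ = ∑ i, (P * (hmix x k i * (∑ j, hmix x l j * h x i j))
            - (B x * (hmix x k i * u x i)) * C) := by
          refine Finset.sum_congr rfl fun i _ => ?_
          rw [hC]
          simp only [Finset.mul_sum, ← Finset.sum_sub_distrib]
          exact Finset.sum_congr rfl fun j _ => by rw [hD']; ring
      _ = ∑ i, (P * (hmix x k i * h x l i) - (B x * C) * (hmix x k i * u x i)) := by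
          simp only [hcB]
          exact Finset.sum_congr rfl fun i _ => by ring
      _ = P * (∑ i, hmix x k i * h x l i) - (B x * C) * (∑ i, hmix x k i * u x i) := by
          simp only [Finset.mul_sum, ← Finset.sum_sub_distrib]
      _ = P * h x k l := by rw [hcB, hc1]; ring
  have F3' : ∀ x k l, B x * (∑ i, ∑ j, hmix x k i * hmix x l j * Du x j i)
      = (A x * (∑ i, uup x i * η x i) - (∑ i, uup x i * DA x i)) * h x k l := by
    intro x k l
    obtain ⟨P, hP⟩ : ∃ P, P = A x * (∑ i, uup x i * η x i) - (∑ i, uup x i * DA x i) :=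
      ⟨_, rfl⟩
    obtain ⟨C, hC⟩ : ∃ C, C = ∑ j, hmix x l j * u x j := ⟨_, rfl⟩
    have hC0 : C = 0 := by rw [hC]; exact hc1 x l
    have hD' : ∀ a b, B x * Du x a b = P * h x a b - B x * (u x a * acc x b) :=
      fun a b => by rw [hP]; exact hD x a b
    rw [← hP]
    calc B x * (∑ i, ∑ j, hmix x k i * hmix x l j * Du x j i)
        = ∑ i, ∑ j, hmix x k i * hmix x l j * (B x * Du x j i) := by
          rw [Finset.mul_sum]
          refine Finset.sum_congr rfl fun i _ => ?_
          rw [Finset.mul_sum]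
          exact Finset.sum_congr rfl fun j _ => by ring
      _ = ∑ i, (P * (hmix x k i * (∑ j, hmix x l j * h x j i))
            - (B x * (hmix x k i * acc x i)) * C) := by
          refine Finset.sum_congr rfl fun i _ => ?_
          rw [hC]
          simp only [Finset.mul_sum, ← Finset.sum_sub_distrib]
          exact Finset.sum_congr rfl fun j _ => by rw [hD']; ring
      _ = ∑ i, (P * (hmix x k i * h x l i)) := by
          simp only [hcA, hC0]
          exact Finset.sum_congr rfl fun i _ => by ring
      _ = P * (∑ i, hmix x k i * h x l i) := by
          simp only [Finset.mul_sum]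
      _ = P * h x k l := by rw [hcB]
  refine ⟨K1, K2, ?_, ?_⟩
  · intro x k l
    have key : B x * σ x k l = 0 := by
      have hsplit : (∑ i, ∑ j, hmix x k i * hmix x l j * (Du x i j + Du x j i))
          = (∑ i, ∑ j, hmix x k i * hmix x l j * Du x i j)
            + (∑ i, ∑ j, hmix x k i * hmix x l j * Du x j i) := by
        simp only [← Finset.sum_add_distrib]
        exact Finset.sum_congr rfl fun i _ => Finset.sum_congr rfl fun j _ => by ring
      have e : B x * σ x k l
          = (1/2) * (B x * (∑ i, ∑ j, hmix x k i * hmix x l j * Du x i j)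
              + B x * (∑ i, ∑ j, hmix x k i * hmix x l j * Du x j i))
            - (B x * θ x) * h x k l / ((n:ℝ) - 1) := by
        rw [hσ, hsplit]; ring
      rw [e, F3, F3', F2]
      field_simp
      ring
    rcases mul_eq_zero.mp key with h' | h'
    · exact absurd h' (hB x)
    · exact h'
  · intro x k l
    have key : B x * ω x k l = 0 := by
      have hsplit : (∑ i, ∑ j, hmix x k i * hmix x l j * (Du x i j - Du x j i))
          = (∑ i, ∑ j, hmix x k i * hmix x l j * Du x i j)
            - (∑ i, ∑ j, hmix x k i * hmix x l j * Du x j i) := by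
        simp only [← Finset.sum_sub_distrib]
        exact Finset.sum_congr rfl fun i _ => Finset.sum_congr rfl fun j _ => by ring
      have e : B x * ω x k l
          = (1/2) * (B x * (∑ i, ∑ j, hmix x k i * hmix x l j * Du x i j)
              - B x * (∑ i, ∑ j, hmix x k i * hmix x l j * Du x j i)) := by
        rw [hω, hsplit]; ring
      rw [e, F3, F3']
      ring
    rcases mul_eq_zero.mp key with h' | h'
    · exact absurd h' (hB x)
    · exact h'
end
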